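/- arXiv:1705.05671 — 4 statements merged into one kernel-verified Lean document; each statement's English description precedes it below -/
import Mathlib

section
/- Suppose that G ⊊ X is a b-uniform domain in a rectifiably connected metric space X, and that γ is an arc contained in {x ∈ G : δ_G(x) ≤ r}. If γ is (ν,h)-solid, then diam(γ) ≤ M₁ r, where M₁ = M₁(b, ν, h). -/
open Set Metric ENNReal Filter

noncomputable section

variable {X : Type*} {Y : Type*} [MetricSpace X] [MetricSpace Y]

/-- The distance from a point `z` to the boundary (complement) of `G`;
for an open proper subset this is the distance to `∂G`. -/
def bdist (G : Set X) (z : X) : ℝ := Metric.infDist z Gᶜ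

/-- A domain: a connected (hence nonempty) open set. -/
def IsDomainSet (G : Set X) : Prop := IsOpen G ∧ IsConnected G

/-- A proper domain `G ⊊ X`. -/
def IsProperDomain (G : Set X) : Prop := IsOpen G ∧ IsConnected G ∧ G ≠ Set.univ

/-- A curve (parametrized on `[0,1]`) with image in `G`. -/
def IsCurveIn (G : Set X) (γ : ℝ → X) : Prop :=
  ContinuousOn γ (Set.Icc 0 1) ∧ Set.MapsTo γ (Set.Icc 0 1) G

/-- A set `A` is `c`-quasiconvex: each pair of points of `A` can be joined inside `A`
by a curve of length at most `c` times the distance between the points. -/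
def IsCQuasiconvex (A : Set X) (c : ℝ) : Prop :=
  ∀ x ∈ A, ∀ y ∈ A, ∃ γ : ℝ → X, ContinuousOn γ (Set.Icc 0 1) ∧
    Set.MapsTo γ (Set.Icc 0 1) A ∧ γ 0 = x ∧ γ 1 = y ∧
    eVariationOn γ (Set.Icc 0 1) ≤ ENNReal.ofReal (c * dist x y)

/-- A rectifiably connected metric space. -/
def IsRectifiablyConnectedSpace (X : Type*) [MetricSpace X] : Prop :=
  ∀ x y : X, ∃ γ : ℝ → X, ContinuousOn γ (Set.Icc 0 1) ∧ γ 0 = x ∧ γ 1 = y ∧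
    eVariationOn γ (Set.Icc 0 1) < ⊤

/-- The quasihyperbolic length `∫_γ |dz|/δ_G(z)` of the part of the curve `γ`
corresponding to the parameter set `s`, defined as the supremum of lower
Riemann–Stieltjes sums. -/
def qhLength (G : Set X) (γ : ℝ → X) (s : Set ℝ) : ℝ≥0∞ :=
  ⨆ p : ℕ × { u : ℕ → ℝ // Monotone u ∧ ∀ i, u i ∈ s },
    ∑ i ∈ Finset.range p.1,
      edist (γ (p.2.1 (i + 1))) (γ (p.2.1 i)) /
        ENNReal.ofReal (⨆ t ∈ Set.Icc (p.2.1 i) (p.2.1 (i + 1)), bdist G (γ t))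

/-- The quasihyperbolic distance in `G`: the infimum of quasihyperbolic lengths of
curves joining `x` to `y` in `G`. -/
def qhDist (G : Set X) (x y : X) : ℝ≥0∞ :=
  ⨅ γ ∈ {γ : ℝ → X | IsCurveIn G γ ∧ γ 0 = x ∧ γ 1 = y}, qhLength G γ (Set.Icc 0 1)

/-- The `h`-coarse quasihyperbolic length of the part of `γ` over the parameter set `s`:
the supremum of `∑ k_G(x_{j-1}, x_j)` over all `h`-coarse sequences of successive
points of `γ` (and `0` if there is no such sequence). -/
def coarseQHLength (G : Set X) (γ : ℝ → X) (s : Set ℝ) (h : ℝ) : ℝ≥0∞ :=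
  ⨆ p : { q : ℕ × (ℕ → ℝ) // 1 ≤ q.1 ∧ Monotone q.2 ∧ (∀ i, q.2 i ∈ s) ∧
      ∀ i < q.1, ENNReal.ofReal h ≤ qhDist G (γ (q.2 i)) (γ (q.2 (i + 1))) },
    ∑ i ∈ Finset.range p.1.1, qhDist G (γ (p.1.2 i)) (γ (p.1.2 (i + 1)))

/-- An `ε`-short arc in `G`: an arc whose quasihyperbolic length is at most
`k_G` of its endpoints plus `ε`. -/
def IsShortArcIn (G : Set X) (γ : ℝ → X) (ε : ℝ) : Prop :=
  IsCurveIn G γ ∧ Set.InjOn γ (Set.Icc 0 1) ∧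
    qhLength G γ (Set.Icc 0 1) ≤ qhDist G (γ 0) (γ 1) + ENNReal.ofReal ε

/-- A `(ν,h)`-solid arc in `G`. -/
def IsSolidArcIn (G : Set X) (γ : ℝ → X) (ν h : ℝ) : Prop :=
  IsCurveIn G γ ∧ Set.InjOn γ (Set.Icc 0 1) ∧
    ∀ a b : ℝ, a ∈ Set.Icc (0:ℝ) 1 → b ∈ Set.Icc (0:ℝ) 1 → a ≤ b →
      coarseQHLength G γ (Set.Icc a b) h ≤ ENNReal.ofReal ν * qhDist G (γ a) (γ b)

/-- A `b`-uniform domain: every pair of points can be joined by a double `b`-cone arc. -/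
def IsUniformDomain (G : Set X) (b : ℝ) : Prop :=
  ∀ x ∈ G, ∀ y ∈ G, ∃ γ : ℝ → X, IsCurveIn G γ ∧ γ 0 = x ∧ γ 1 = y ∧
    (∀ t ∈ Set.Icc (0:ℝ) 1,
      min (eVariationOn γ (Set.Icc 0 t)) (eVariationOn γ (Set.Icc t 1)) ≤
        ENNReal.ofReal (b * bdist G (γ t))) ∧
    eVariationOn γ (Set.Icc 0 1) ≤ ENNReal.ofReal (b * dist x y)

/-- The inner (length) distance `λ_G(x,y)` in `G`. -/
def innerDist (G : Set X) (x y : X) : ℝ≥0∞ :=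
  ⨅ γ ∈ {γ : ℝ → X | IsCurveIn G γ ∧ γ 0 = x ∧ γ 1 = y},
    eVariationOn γ (Set.Icc 0 1)

/-- An inner `b`-uniform domain: as a uniform domain, but with the length of the
connecting arc bounded by `b` times the inner distance of the endpoints. -/
def IsInnerUniformDomain (G : Set X) (b : ℝ) : Prop :=
  ∀ x ∈ G, ∀ y ∈ G, ∃ γ : ℝ → X, IsCurveIn G γ ∧ γ 0 = x ∧ γ 1 = y ∧
    (∀ t ∈ Set.Icc (0:ℝ) 1,
      min (eVariationOn γ (Set.Icc 0 t)) (eVariationOn γ (Set.Icc t 1)) ≤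
        ENNReal.ofReal (b * bdist G (γ t))) ∧
    eVariationOn γ (Set.Icc 0 1) ≤ ENNReal.ofReal b * innerDist G x y

/-- An `a`-John domain with center `y₀`. -/
def IsJohnDomain (G : Set X) (a : ℝ) (y₀ : X) : Prop :=
  ∀ x ∈ G, ∃ γ : ℝ → X, IsCurveIn G γ ∧ γ 0 = x ∧ γ 1 = y₀ ∧
    eVariationOn γ (Set.Icc 0 1) < ⊤ ∧
    ∀ t ∈ Set.Icc (0:ℝ) 1,
      min (eVariationOn γ (Set.Icc 0 t)) (eVariationOn γ (Set.Icc t 1)) ≤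
        ENNReal.ofReal (a * bdist G (γ t))

/-- `f` is weakly `H`-quasisymmetric on `G`. -/
def WeaklyQSOn (f : X → Y) (G : Set X) (H : ℝ) : Prop :=
  ∀ x ∈ G, ∀ a ∈ G, ∀ b ∈ G,
    dist x a ≤ dist x b → dist (f x) (f a) ≤ H * dist (f x) (f b)

/-- `f : G → G'` is a homeomorphism with inverse `g`. -/
def IsHomeoOn (f : X → Y) (g : Y → X) (G : Set X) (G' : Set Y) : Prop :=
  ContinuousOn f G ∧ ContinuousOn g G' ∧ Set.MapsTo f G G' ∧ Set.MapsTo g G' G ∧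
    (∀ x ∈ G, g (f x) = x) ∧ (∀ y ∈ G', f (g y) = y)

/-- `f : G → G'` is `C`-coarsely `M`-quasihyperbolic. -/
def IsCQHOn (f : X → Y) (G : Set X) (G' : Set Y) (M C : ℝ) : Prop :=
  ∀ x ∈ G, ∀ y ∈ G,
    qhDist G x y ≤ ENNReal.ofReal M * qhDist G' (f x) (f y) + ENNReal.ofReal C ∧
    qhDist G' (f x) (f y) ≤ ENNReal.ofReal M * qhDist G x y + ENNReal.ofReal C

end
universe u v


section Work
universe u860
variable {X : Type u860} [MetricSpace X]




lemma bdist_nonneg (G : Set X) (z : X) : 0 ≤ bdist G z := Metric.infDist_nonneg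

lemma bdist_pos {G : Set X} (hGo : IsOpen G) (hGc : Gᶜ.Nonempty) {z : X} (hz : z ∈ G) :
    0 < bdist G z :=
  (hGo.isClosed_compl.notMem_iff_infDist_pos hGc).mp (by simpa using hz)

lemma bdist_le_add_dist (G : Set X) (z w : X) : bdist G z ≤ bdist G w + dist z w :=
  Metric.infDist_le_infDist_add_dist

lemma bdist_continuous (G : Set X) : Continuous (bdist G) :=
  Metric.continuous_infDist_pt _

/-- lower bound on qhLength via a chosen partition -/
lemma partition_le_qhLength (G : Set X) (σ : ℝ → X) (s : Set ℝ) (n : ℕ) (u : ℕ → ℝ)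
    (hu : Monotone u) (hus : ∀ i, u i ∈ s) :
    (∑ i ∈ Finset.range n, edist (σ (u (i + 1))) (σ (u i)) /
        ENNReal.ofReal (⨆ t ∈ Set.Icc (u i) (u (i + 1)), bdist G (σ t))) ≤
      qhLength G σ s :=
  le_iSup (fun p : ℕ × { u : ℕ → ℝ // Monotone u ∧ ∀ i, u i ∈ s } =>
    ∑ i ∈ Finset.range p.1,
      edist (σ (p.2.1 (i + 1))) (σ (p.2.1 i)) /
        ENNReal.ofReal (⨆ t ∈ Set.Icc (p.2.1 i) (p.2.1 (i + 1)), bdist G (σ t)))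
    (⟨n, ⟨u, hu, hus⟩⟩)

lemma qhLength_le (G : Set X) (σ : ℝ → X) (s : Set ℝ) (L : ℝ≥0∞)
    (H : ∀ (n : ℕ) (u : ℕ → ℝ), Monotone u → (∀ i, u i ∈ s) →
      (∑ i ∈ Finset.range n, edist (σ (u (i + 1))) (σ (u i)) /
        ENNReal.ofReal (⨆ t ∈ Set.Icc (u i) (u (i + 1)), bdist G (σ t))) ≤ L) :
    qhLength G σ s ≤ L :=
  iSup_le fun p => H p.1 p.2.1 p.2.2.1 p.2.2.2

lemma qhDist_le_qhLength (G : Set X) (σ : ℝ → X) (hσ : IsCurveIn G σ) {x y : X}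
    (h0 : σ 0 = x) (h1 : σ 1 = y) : qhDist G x y ≤ qhLength G σ (Set.Icc 0 1) :=
  iInf₂_le σ ⟨hσ, h0, h1⟩

lemma le_qhDist (G : Set X) (x y : X) (L : ℝ≥0∞)
    (H : ∀ σ : ℝ → X, IsCurveIn G σ → σ 0 = x → σ 1 = y → L ≤ qhLength G σ (Set.Icc 0 1)) :
    L ≤ qhDist G x y :=
  le_iInf₂ fun σ hσ => H σ hσ.1 hσ.2.1 hσ.2.2

lemma innerSup_le {G : Set X} {γ : ℝ → X} {a b C : ℝ} (hC : 0 ≤ C)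
    (hb : ∀ t ∈ Set.Icc a b, bdist G (γ t) ≤ C) :
    (⨆ t ∈ Set.Icc a b, bdist G (γ t)) ≤ C :=
  Real.iSup_le (fun t => Real.iSup_le (fun ht => hb t ht) hC) hC

lemma le_innerSup {G : Set X} {γ : ℝ → X} {a b C : ℝ} {t₀ : ℝ}
    (hb : ∀ t ∈ Set.Icc a b, bdist G (γ t) ≤ C) (ht₀ : t₀ ∈ Set.Icc a b) :
    bdist G (γ t₀) ≤ ⨆ t ∈ Set.Icc a b, bdist G (γ t) := by
  have hB : BddAbove (Set.range fun t => ⨆ _ : t ∈ Set.Icc a b, bdist G (γ t)) := by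
    refine ⟨max C 0, ?_⟩
    rintro - ⟨t, rfl⟩
    by_cases ht : t ∈ Set.Icc a b
    · simp only [ciSup_pos (f := fun _ : t ∈ Set.Icc a b => bdist G (γ t)) ht]
      exact le_max_of_le_left (hb t ht)
    · have : IsEmpty (t ∈ Set.Icc a b) := isEmpty_Prop.2 ht
      simp only [Real.iSup_of_isEmpty]
      exact le_max_right _ _
  calc bdist G (γ t₀)
      = ⨆ _ : t₀ ∈ Set.Icc a b, bdist G (γ t₀) :=
        (ciSup_pos (f := fun _ : t₀ ∈ Set.Icc a b => bdist G (γ t₀)) ht₀).symm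
    _ ≤ _ := le_ciSup hB t₀


end Work
section Work2
universe u861
variable {X : Type u861} [MetricSpace X]

/-- The fundamental lower bound for the quasihyperbolic distance. -/
lemma log_le_qhDist {G : Set X} (hGo : IsOpen G) (hGc : Gᶜ.Nonempty) {x y : X} (hx : x ∈ G) :
    ENNReal.ofReal (Real.log (1 + dist x y / bdist G x)) ≤ qhDist G x y := by
  have hδx : 0 < bdist G x := bdist_pos hGo hGc hx
  refine le_qhDist G x y _ (fun σ hσ hσ0 hσ1 => ?_)
  have aux : ∀ ε : ℝ, 0 < ε →
      ENNReal.ofReal (Real.log (1 + dist x y / (bdist G x + ε))) ≤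
        qhLength G σ (Set.Icc 0 1) := by
    intro ε hε
    have hσc : ContinuousOn σ (Set.Icc 0 1) := hσ.1
    have huc : UniformContinuousOn σ (Set.Icc 0 1) :=
      isCompact_Icc.uniformContinuousOn_of_continuous hσc
    rw [Metric.uniformContinuousOn_iff] at huc
    obtain ⟨η, hη, hucη⟩ := huc ε hε
    obtain ⟨n₀, hn₀⟩ := exists_nat_one_div_lt hη
    set N : ℕ := n₀ + 1 with hN
    have hNpos : (0:ℝ) < (N:ℝ) := by positivity
    set u : ℕ → ℝ := fun i => min ((i : ℝ) / (N:ℝ)) 1 with hudef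
    have humono : Monotone u := by
      intro i j hij
      refine min_le_min ?_ le_rfl
      have hij' : (i:ℝ) ≤ (j:ℝ) := by exact_mod_cast hij
      gcongr
    have humem : ∀ i, u i ∈ Set.Icc (0:ℝ) 1 :=
      fun i => ⟨le_min (by positivity) zero_le_one, min_le_right _ _⟩
    have hu0 : u 0 = 0 := by simp [hudef]
    have huN : u N = 1 := by
      simp only [hudef]
      rw [div_self hNpos.ne']
      simp
    have hstep : ∀ i : ℕ, u (i + 1) - u i ≤ 1 / (N:ℝ) := by
      intro i
      have h1 : u (i+1) ≤ (i:ℝ)/(N:ℝ) + 1/(N:ℝ) := by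
        refine (min_le_left _ _).trans ?_
        push_cast
        rw [add_div]
      have h2 : u (i+1) ≤ 1 := min_le_right _ _
      have hNinv : (0:ℝ) ≤ 1/(N:ℝ) := by positivity
      rcases le_or_gt ((i:ℝ)/(N:ℝ)) 1 with hc | hc
      · have : u i = (i:ℝ)/(N:ℝ) := min_eq_left hc
        linarith
      · have : u i = 1 := min_eq_right hc.le
        linarith
    have hstep' : ∀ i : ℕ, ∀ t ∈ Set.Icc (u i) (u (i+1)), dist (σ t) (σ (u i)) ≤ ε := by
      intro i t ht
      have htI : t ∈ Set.Icc (0:ℝ) 1 :=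
        ⟨(humem i).1.trans ht.1, ht.2.trans (humem (i+1)).2⟩
      have hd : dist t (u i) < η := by
        rw [Real.dist_eq, abs_of_nonneg (by linarith [ht.1])]
        have : t - u i ≤ 1/(N:ℝ) := by
          have := hstep i; linarith [ht.2]
        calc t - u i ≤ 1/(N:ℝ) := this
          _ = 1/((n₀:ℝ)+1) := by norm_num [hN]
          _ < η := hn₀
      exact (hucη t htI (u i) (humem i) hd).le
    set d : ℕ → ℝ := fun i => dist (σ (u i)) (σ (u (i+1))) with hddef
    set D : ℕ → ℝ := fun i => ∑ j ∈ Finset.range i, d j with hDdef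
    have hdnn : ∀ i, 0 ≤ d i := fun i => dist_nonneg
    have hD0 : D 0 = 0 := by simp [hDdef]
    have hDnn : ∀ i, 0 ≤ D i := fun i => Finset.sum_nonneg fun j _ => hdnn j
    have hDsucc : ∀ i, D (i+1) = D i + d i := fun i => Finset.sum_range_succ d i
    have hDmono : Monotone D := monotone_nat_of_le_succ fun i => by
      rw [hDsucc]; linarith [hdnn i]
    have hdistD : ∀ i, dist (σ (u i)) (σ (u 0)) ≤ D i := by
      intro i
      have := dist_le_range_sum_dist (fun j => σ (u j)) i
      simpa [hDdef, hddef, dist_comm] using this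
    set c : ℝ := bdist G x + ε with hcdef
    have hc : 0 < c := by positivity
    set g : ℕ → ℝ := fun i => Real.log (c + D i) with hgdef
    have hcD : ∀ i, 0 < c + D i := fun i => by have := hDnn i; linarith
    have key : ∀ i : ℕ, ENNReal.ofReal (g (i+1) - g i) ≤
        edist (σ (u (i + 1))) (σ (u i)) /
          ENNReal.ofReal (⨆ t ∈ Set.Icc (u i) (u (i + 1)), bdist G (σ t)) := by
      intro i
      have hsup : (⨆ t ∈ Set.Icc (u i) (u (i+1)), bdist G (σ t)) ≤ c + D i := by
        refine innerSup_le (hcD i).le (fun t ht => ?_)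
        calc bdist G (σ t) ≤ bdist G x + dist (σ t) x := bdist_le_add_dist G _ _
          _ ≤ bdist G x + (dist (σ t) (σ (u i)) + dist (σ (u i)) (σ (u 0))) := by
              have ht3 : dist (σ t) x ≤ dist (σ t) (σ (u i)) + dist (σ (u i)) (σ (u 0)) := by
                rw [hu0, hσ0]
                exact dist_triangle _ _ _
              linarith
          _ ≤ bdist G x + (ε + D i) := by
              have := hstep' i t ht
              have := hdistD i
              linarith
          _ = c + D i := by rw [hcdef]; ring
      calc ENNReal.ofReal (g (i+1) - g i)
          ≤ ENNReal.ofReal (d i / (c + D i)) := by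
            apply ENNReal.ofReal_le_ofReal
            have heq : g (i+1) - g i = Real.log ((c + D (i+1)) / (c + D i)) := by
              rw [Real.log_div (hcD (i+1)).ne' (hcD i).ne']
            rw [heq]
            have hlog := Real.log_le_sub_one_of_pos
              (show (0:ℝ) < (c + D (i+1)) / (c + D i) by positivity)
            have : (c + D (i+1)) / (c + D i) - 1 = d i / (c + D i) := by
              rw [hDsucc i]
              rw [div_sub_one (hcD i).ne']; congr 1; ring
            linarith
        _ = ENNReal.ofReal (d i) / ENNReal.ofReal (c + D i) :=
            ENNReal.ofReal_div_of_pos (hcD i)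
        _ ≤ edist (σ (u (i + 1))) (σ (u i)) /
              ENNReal.ofReal (⨆ t ∈ Set.Icc (u i) (u (i + 1)), bdist G (σ t)) := by
            rw [edist_dist, dist_comm]
            exact ENNReal.div_le_div_left (ENNReal.ofReal_le_ofReal hsup) _
    calc ENNReal.ofReal (Real.log (1 + dist x y / (bdist G x + ε)))
        ≤ ENNReal.ofReal (g N - g 0) := by
          apply ENNReal.ofReal_le_ofReal
          have hgN : g N - g 0 = Real.log ((c + D N) / c) := by
            rw [Real.log_div (hcD N).ne' hc.ne', hgdef]
            simp [hD0]
          have h1 : 1 + dist x y / (bdist G x + ε) = (c + dist x y) / c := by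
            field_simp
            rw [hcdef]; ring
          have h2 : dist x y ≤ D N := by
            have hDN := hdistD N
            rw [hu0, huN, hσ0, hσ1] at hDN
            rwa [dist_comm]
          rw [hgN, h1]
          refine Real.log_le_log (by positivity) ?_
          gcongr
        _ = ENNReal.ofReal (∑ i ∈ Finset.range N, (g (i+1) - g i)) := by
            rw [Finset.sum_range_sub g N]
        _ = ∑ i ∈ Finset.range N, ENNReal.ofReal (g (i+1) - g i) :=
            ENNReal.ofReal_sum_of_nonneg (fun i _ => by
              have : c + D i ≤ c + D (i+1) := by
                have := hDmono (Nat.le_succ i); linarith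
              have := Real.log_le_log (hcD i) this
              simp only [hgdef]
              linarith)
        _ ≤ ∑ i ∈ Finset.range N, edist (σ (u (i + 1))) (σ (u i)) /
              ENNReal.ofReal (⨆ t ∈ Set.Icc (u i) (u (i + 1)), bdist G (σ t)) :=
            Finset.sum_le_sum (fun i _ => key i)
        _ ≤ qhLength G σ (Set.Icc 0 1) := partition_le_qhLength G σ _ N u humono humem
  have cont : ContinuousAt
      (fun ε : ℝ => ENNReal.ofReal (Real.log (1 + dist x y / (bdist G x + ε)))) 0 := by
    apply ENNReal.continuous_ofReal.continuousAt.comp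
    apply (Real.continuousAt_log (by positivity)).comp
    exact continuousAt_const.add (continuousAt_const.div
      (continuousAt_const.add continuousAt_id) (by simpa using hδx.ne'))
  have hlim := le_of_tendsto (cont.tendsto.mono_left nhdsWithin_le_nhds)
    (eventually_nhdsWithin_of_forall (fun ε (hε : ε ∈ Set.Ioi (0:ℝ)) => aux ε hε))
  simpa using hlim

end Work2
section Work3
universe u862
variable {X : Type u862} [MetricSpace X]

lemma dist_le_of_qhDist_le {G : Set X} (hGo : IsOpen G) (hGc : Gᶜ.Nonempty) {p q : X}
    (hp : p ∈ G) {κ : ℝ} (hκ : 0 ≤ κ) (hle : qhDist G p q ≤ ENNReal.ofReal κ) :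
    dist p q ≤ bdist G p * (Real.exp κ - 1) := by
  have hδ := bdist_pos hGo hGc hp
  have h1 := (log_le_qhDist hGo hGc hp).trans hle
  rw [ENNReal.ofReal_le_ofReal_iff hκ] at h1
  have h2 : 1 + dist p q / bdist G p ≤ Real.exp κ := by
    have h3 := Real.exp_le_exp.mpr h1
    rwa [Real.exp_log (by positivity)] at h3
  have h3 : dist p q / bdist G p ≤ Real.exp κ - 1 := by linarith
  calc dist p q = dist p q / bdist G p * bdist G p := by field_simp
    _ ≤ (Real.exp κ - 1) * bdist G p := mul_le_mul_of_nonneg_right h3 hδ.le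
    _ = bdist G p * (Real.exp κ - 1) := mul_comm _ _

lemma icc_variation_ne_top {σ : ℝ → X} (hfin : eVariationOn σ (Set.Icc (0:ℝ) 1) ≠ ⊤)
    {a b : ℝ} (ha : 0 ≤ a) (hb : b ≤ 1) : eVariationOn σ (Set.Icc a b) ≠ ⊤ :=
  ne_top_of_le_ne_top hfin (eVariationOn.mono σ (Set.Icc_subset_Icc ha hb))

lemma icc_variation_add (σ : ℝ → X) {a b c : ℝ} (hab : a ≤ b) (hbc : b ≤ c) :
    eVariationOn σ (Set.Icc a b) + eVariationOn σ (Set.Icc b c) =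
      eVariationOn σ (Set.Icc a c) := by
  have := eVariationOn.Icc_add_Icc σ (s := Set.univ) hab hbc trivial
  simpa using this

lemma variation_right_cont {σ : ℝ → X} (hσc : ContinuousOn σ (Set.Icc 0 1))
    (hfin : eVariationOn σ (Set.Icc (0:ℝ) 1) ≠ ⊤) {t₀ : ℝ} (ht₀ : t₀ ∈ Set.Ico (0:ℝ) 1)
    {ε : ℝ} (hε : 0 < ε) :
    ∃ t' ∈ Set.Ioc t₀ 1, eVariationOn σ (Set.Icc t₀ t') ≤ ENNReal.ofReal ε := by
  by_contra hcon
  push_neg at hcon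
  set W := eVariationOn σ (Set.Icc t₀ 1) with hWdef
  have hWfin : W ≠ ⊤ := icc_variation_ne_top hfin ht₀.1 le_rfl
  have hWbig : ENNReal.ofReal ε < W := hcon 1 ⟨ht₀.2, le_rfl⟩
  have hc4W : ENNReal.ofReal (ε/4) < W :=
    lt_of_le_of_lt (ENNReal.ofReal_le_ofReal (by linarith)) hWbig
  -- continuity at t₀ from the right
  have hct : ContinuousWithinAt σ (Set.Icc 0 1) t₀ := hσc t₀ ⟨ht₀.1, ht₀.2.le⟩
  rw [Metric.continuousWithinAt_iff] at hct
  obtain ⟨η, hη, hctη⟩ := hct (ε/4) (by positivity)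
  -- a near-maximal partition
  have hW0 : W ≠ 0 := by
    intro h0
    rw [h0] at hWbig
    simpa using hWbig
  have hsub : W - ENNReal.ofReal (ε/4) < W :=
    ENNReal.sub_lt_self hWfin hW0 (ENNReal.ofReal_pos.mpr (by positivity)).ne'
  have hlt : W - ENNReal.ofReal (ε/4) < eVariationOn σ (Set.Icc t₀ 1) := hsub
  simp only [eVariationOn] at hlt
  obtain ⟨⟨n, p, hpmono, hpmem⟩, hpsum⟩ := lt_iSup_iff.mp hlt
  simp only at hpsum
  -- there is an index with p i > t₀
  have hex : ∃ i, i ≤ n ∧ t₀ < p i := by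
    by_contra hno
    push_neg at hno
    have hzero : (∑ i ∈ Finset.range n,
        edist (σ (p (i + 1))) (σ (p i))) = 0 := by
      refine Finset.sum_eq_zero fun i hi => ?_
      rw [Finset.mem_range] at hi
      have h1 : p i = t₀ := le_antisymm (hno i hi.le) (hpmem i).1
      have h2 : p (i+1) = t₀ := le_antisymm (hno (i+1) hi) (hpmem (i+1)).1
      rw [h1, h2, edist_self]
    rw [hzero] at hpsum
    have : (0:ℝ≥0∞) < W - ENNReal.ofReal (ε/4) := tsub_pos_iff_lt.mpr hc4W
    exact absurd hpsum (not_lt_of_ge this.le)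
  classical
  set m := Nat.find hex with hmdef
  obtain ⟨hmn, hmpos⟩ := Nat.find_spec hex
  have hbefore : ∀ j < m, p j = t₀ := by
    intro j hj
    have := Nat.find_min hex hj
    push_neg at this
    rcases lt_or_ge j m with _ | _
    · by_cases hjn : j ≤ n
      · exact le_antisymm (this hjn) (hpmem j).1
      · exact absurd (le_trans (le_of_lt hj) hmn) hjn
    · omega
  set t' := min (p m) (t₀ + η/2) with ht'def
  have ht'1 : t₀ < t' := lt_min hmpos (by linarith)
  have ht'le : t' ≤ p m := min_le_left _ _
  have ht'mem : t' ∈ Set.Ioc t₀ 1 := ⟨ht'1, ht'le.trans (hpmem m).2⟩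
  have ht'01 : t' ∈ Set.Icc (0:ℝ) 1 := ⟨le_trans ht₀.1 ht'1.le, ht'mem.2⟩
  have hdt' : dist t' t₀ < η := by
    rw [Real.dist_eq, abs_of_nonneg (by linarith)]
    have : t' ≤ t₀ + η/2 := min_le_right _ _
    linarith
  have hedist : edist (σ (p m)) (σ t₀) ≤
      edist (σ (p m)) (σ t') + ENNReal.ofReal (ε/4) := by
    refine (edist_triangle _ (σ t') _).trans ?_
    gcongr
    rw [edist_dist]
    exact ENNReal.ofReal_le_ofReal (hctη ht'01 hdt').le
  set q : ℕ → ℝ := fun i => max (p i) t' with hqdef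
  have hqmono : Monotone q := fun i j hij => max_le_max (hpmono hij) le_rfl
  have hqmem : ∀ i, q i ∈ Set.Icc t' 1 :=
    fun i => ⟨le_max_right _ _, max_le (hpmem i).2 ht'mem.2⟩
  have hqi : ∀ i, m ≤ i → q i = p i := fun i hi => max_eq_left (ht'le.trans (hpmono hi))
  have hsumcomp : (∑ i ∈ Finset.range n, edist (σ (p (i + 1))) (σ (p i))) ≤
      (∑ i ∈ Finset.range n, edist (σ (q (i + 1))) (σ (q i))) + ENNReal.ofReal (ε/4) := by
    rcases Nat.eq_zero_or_pos m with hm0 | hmpos'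
    · have : ∀ i, q i = p i := fun i => hqi i (by omega)
      simp only [this]
      exact le_self_add
    · rcases le_or_gt n (m-1) with hn' | hn'
      · -- m - 1 ≥ n : all indices i < n have i+1 ≤ m-1+1 = m, i.e. i+1 ≤ m
        have hzero : (∑ i ∈ Finset.range n, edist (σ (p (i + 1))) (σ (p i))) = 0 := by
          refine Finset.sum_eq_zero fun i hi => ?_
          rw [Finset.mem_range] at hi
          have h1 : p i = t₀ := hbefore i (by omega)
          have h2 : p (i+1) = t₀ := by
            rcases lt_or_ge (i+1) m with hlt' | hge
            · exact hbefore _ hlt'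
            · -- i+1 ≥ m and i+1 ≤ n ≤ m-1 < m : contradiction
              omega
          rw [h1, h2, edist_self]
        rw [hzero]
        exact zero_le
      · -- m - 1 < n, so the term i = m-1 exists
        have hterm : ∀ i ∈ Finset.range n,
            edist (σ (p (i + 1))) (σ (p i)) ≤
              edist (σ (q (i + 1))) (σ (q i)) +
                (if i = m - 1 then ENNReal.ofReal (ε/4) else 0) := by
          intro i hi
          rw [Finset.mem_range] at hi
          rcases lt_trichotomy i (m-1) with hlt' | heq | hgt
          · have h1 : p i = t₀ := hbefore i (by omega)
            have h2 : p (i+1) = t₀ := hbefore (i+1) (by omega)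
            rw [h1, h2, edist_self]
            exact zero_le
          · have h1 : p i = t₀ := hbefore i (by omega)
            have h2 : i + 1 = m := by omega
            have hq1 : q i = t' := by
              rw [hqdef]
              simp only [h1]
              exact max_eq_right ht'1.le
            rw [if_pos heq, h2, hqi m le_rfl, h1, hq1]
            exact hedist
          · have him : m ≤ i := by omega
            rw [hqi i him, hqi (i+1) (by omega), if_neg (by omega)]
            simp
        calc (∑ i ∈ Finset.range n, edist (σ (p (i + 1))) (σ (p i)))
            ≤ ∑ i ∈ Finset.range n, (edist (σ (q (i + 1))) (σ (q i)) +
                (if i = m - 1 then ENNReal.ofReal (ε/4) else 0)) :=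
              Finset.sum_le_sum hterm
          _ = (∑ i ∈ Finset.range n, edist (σ (q (i + 1))) (σ (q i))) +
                ∑ i ∈ Finset.range n, (if i = m - 1 then ENNReal.ofReal (ε/4) else 0) := by
              rw [Finset.sum_add_distrib]
          _ ≤ _ := by
              have hite : (∑ i ∈ Finset.range n,
                  (if i = m - 1 then ENNReal.ofReal (ε/4) else 0)) = ENNReal.ofReal (ε/4) := by
                rw [Finset.sum_ite_eq' (Finset.range n) (m-1)
                  (fun _ => ENNReal.ofReal (ε/4))]
                simp [Finset.mem_range.mpr hn']
              rw [hite]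
  -- conclude
  have hq_var : (∑ i ∈ Finset.range n, edist (σ (q (i + 1))) (σ (q i))) ≤
      eVariationOn σ (Set.Icc t' 1) :=
    eVariationOn.sum_le (f := σ) (n := n) hqmono hqmem
  have hV1fin : eVariationOn σ (Set.Icc t' 1) ≠ ⊤ :=
    icc_variation_ne_top hfin ht'01.1 le_rfl
  have hWlt : W < eVariationOn σ (Set.Icc t' 1) + ENNReal.ofReal (ε/2) := by
    have h5 : W - ENNReal.ofReal (ε/4) <
        eVariationOn σ (Set.Icc t' 1) + ENNReal.ofReal (ε/4) :=
      lt_of_lt_of_le hpsum (hsumcomp.trans (by gcongr))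
    have h6 := ENNReal.sub_lt_iff_lt_right (by simp) hc4W.le |>.mp h5
    calc W < eVariationOn σ (Set.Icc t' 1) + ENNReal.ofReal (ε/4) + ENNReal.ofReal (ε/4) := h6
      _ = eVariationOn σ (Set.Icc t' 1) + ENNReal.ofReal (ε/2) := by
          rw [add_assoc, ← ENNReal.ofReal_add (by positivity) (by positivity)]
          norm_num
          congr 1
          ring
  have hadd : eVariationOn σ (Set.Icc t₀ t') + eVariationOn σ (Set.Icc t' 1) = W :=
    icc_variation_add σ ht'1.le ht'mem.2
  have hsmall : eVariationOn σ (Set.Icc t₀ t') < ENNReal.ofReal (ε/2) := by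
    rw [← hadd, add_comm (eVariationOn σ (Set.Icc t₀ t'))] at hWlt
    exact (ENNReal.add_lt_add_iff_left hV1fin).mp hWlt
  have := hcon t' ht'mem
  have : ENNReal.ofReal ε < ENNReal.ofReal (ε/2) := lt_trans this hsmall
  rw [ENNReal.ofReal_lt_ofReal_iff (by positivity)] at this
  linarith

end Work3
section Work4
universe u863
variable {X : Type u863} [MetricSpace X]

lemma variation_left_cont {σ : ℝ → X} (hσc : ContinuousOn σ (Set.Icc 0 1))
    (hfin : eVariationOn σ (Set.Icc (0:ℝ) 1) ≠ ⊤) {t₀ : ℝ} (ht₀ : t₀ ∈ Set.Ioc (0:ℝ) 1)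
    {ε : ℝ} (hε : 0 < ε) :
    ∃ t' ∈ Set.Ico 0 t₀, eVariationOn σ (Set.Icc t' t₀) ≤ ENNReal.ofReal ε := by
  set ρ : ℝ → ℝ := fun s => 1 - s with hρdef
  have hρcomp : ∀ a b : ℝ, eVariationOn (σ ∘ ρ) (Set.Icc a b) =
      eVariationOn σ (Set.Icc (1-b) (1-a)) := by
    intro a b
    rw [eVariationOn.comp_eq_of_antitoneOn σ ρ
      (fun u _ v _ huv => by simp only [hρdef]; linarith)]
    congr 1
    exact Set.image_const_sub_Icc 1 a b
  have hσ'c : ContinuousOn (σ ∘ ρ) (Set.Icc 0 1) := by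
    refine hσc.comp ((continuous_const.sub continuous_id).continuousOn) ?_
    intro t ht
    exact ⟨by simp [hρdef]; linarith [ht.2], by simp [hρdef]; linarith [ht.1]⟩
  have hfin' : eVariationOn (σ ∘ ρ) (Set.Icc (0:ℝ) 1) ≠ ⊤ := by
    rw [hρcomp 0 1]
    norm_num
    exact hfin
  have h1t₀ : (1 - t₀) ∈ Set.Ico (0:ℝ) 1 := ⟨by linarith [ht₀.2], by linarith [ht₀.1]⟩
  obtain ⟨s', hs'mem, hs'⟩ := variation_right_cont hσ'c hfin' h1t₀ hε
  refine ⟨1 - s', ⟨by linarith [hs'mem.2], by linarith [hs'mem.1]⟩, ?_⟩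
  rw [hρcomp (1 - t₀) s'] at hs'
  have h2 : (1:ℝ) - (1 - t₀) = t₀ := by ring
  rw [h2] at hs'
  exact hs'

/-- The real-valued variation function of a continuous curve is continuous. -/
lemma variation_fun_continuousOn {σ : ℝ → X} (hσc : ContinuousOn σ (Set.Icc 0 1))
    (hfin : eVariationOn σ (Set.Icc (0:ℝ) 1) ≠ ⊤) :
    ContinuousOn (fun t => (eVariationOn σ (Set.Icc 0 t)).toReal) (Set.Icc (0:ℝ) 1) := by
  intro t₀ ht₀
  rw [Metric.continuousWithinAt_iff]
  intro ε hε
  -- right window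
  have hR : ∃ dR > 0, ∀ t ∈ Set.Icc (0:ℝ) 1, t₀ ≤ t → t - t₀ < dR →
      (eVariationOn σ (Set.Icc t₀ t)).toReal < ε := by
    rcases eq_or_lt_of_le ht₀.2 with h1 | h1
    · refine ⟨1, one_pos, fun t ht htt₀ _ => ?_⟩
      have : t = t₀ := le_antisymm (h1 ▸ ht.2) htt₀
      rw [this]
      rw [eVariationOn.subsingleton σ (by
        intro a ha b hb
        have := Set.Icc_self t₀ ▸ ha
        have := Set.Icc_self t₀ ▸ hb
        simp_all)]
      simpa using hε
    · obtain ⟨tp, htpmem, htp⟩ := variation_right_cont hσc hfin ⟨ht₀.1, h1⟩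
        (show (0:ℝ) < ε/2 by positivity)
      refine ⟨tp - t₀, by linarith [htpmem.1], fun t ht htt₀ hd => ?_⟩
      have hsub : eVariationOn σ (Set.Icc t₀ t) ≤ eVariationOn σ (Set.Icc t₀ tp) :=
        eVariationOn.mono σ (Set.Icc_subset_Icc le_rfl (by linarith))
      have := hsub.trans htp
      calc (eVariationOn σ (Set.Icc t₀ t)).toReal
          ≤ (ENNReal.ofReal (ε/2)).toReal := ENNReal.toReal_mono (by simp) this
        _ = ε/2 := by rw [ENNReal.toReal_ofReal (by positivity)]
        _ < ε := by linarith
  -- left window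
  have hL : ∃ dL > 0, ∀ t ∈ Set.Icc (0:ℝ) 1, t ≤ t₀ → t₀ - t < dL →
      (eVariationOn σ (Set.Icc t t₀)).toReal < ε := by
    rcases eq_or_lt_of_le ht₀.1 with h1 | h1
    · refine ⟨1, one_pos, fun t ht htt₀ _ => ?_⟩
      have : t = t₀ := le_antisymm htt₀ (h1 ▸ ht.1)
      rw [this]
      rw [eVariationOn.subsingleton σ (by
        intro a ha b hb
        have := Set.Icc_self t₀ ▸ ha
        have := Set.Icc_self t₀ ▸ hb
        simp_all)]
      simpa using hε
    · obtain ⟨tm, htmmem, htm⟩ := variation_left_cont hσc hfin ⟨h1, ht₀.2⟩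
        (show (0:ℝ) < ε/2 by positivity)
      refine ⟨t₀ - tm, by linarith [htmmem.2], fun t ht htt₀ hd => ?_⟩
      have hsub : eVariationOn σ (Set.Icc t t₀) ≤ eVariationOn σ (Set.Icc tm t₀) :=
        eVariationOn.mono σ (Set.Icc_subset_Icc (by linarith) le_rfl)
      have := hsub.trans htm
      calc (eVariationOn σ (Set.Icc t t₀)).toReal
          ≤ (ENNReal.ofReal (ε/2)).toReal := ENNReal.toReal_mono (by simp) this
        _ = ε/2 := by rw [ENNReal.toReal_ofReal (by positivity)]
        _ < ε := by linarith
  obtain ⟨dR, hdR, hRf⟩ := hR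
  obtain ⟨dL, hdL, hLf⟩ := hL
  refine ⟨min dR dL, lt_min hdR hdL, fun t ht hdist => ?_⟩
  have hvadd : ∀ a b : ℝ, 0 ≤ a → a ≤ b → b ≤ 1 →
      (eVariationOn σ (Set.Icc 0 b)).toReal =
        (eVariationOn σ (Set.Icc 0 a)).toReal + (eVariationOn σ (Set.Icc a b)).toReal := by
    intro a b ha hab hb1
    rw [← ENNReal.toReal_add (icc_variation_ne_top hfin le_rfl (hab.trans hb1))
      (icc_variation_ne_top hfin ha hb1), icc_variation_add σ ha hab]
  rw [Real.dist_eq] at hdist ⊢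
  rcases le_total t₀ t with hc | hc
  · have heq := hvadd t₀ t ht₀.1 hc ht.2
    have habs : |t - t₀| = t - t₀ := abs_of_nonneg (by linarith)
    rw [habs] at hdist
    have hkey := hRf t ht hc (lt_of_lt_of_le hdist (min_le_left _ _))
    have hnn : 0 ≤ (eVariationOn σ (Set.Icc t₀ t)).toReal := ENNReal.toReal_nonneg
    rw [abs_of_nonneg (by linarith [heq])]
    linarith [heq]
  · have heq := hvadd t t₀ ht.1 hc ht₀.2
    have habs : |t - t₀| = t₀ - t := by rw [abs_sub_comm]; exact abs_of_nonneg (by linarith)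
    rw [habs] at hdist
    have hkey := hLf t ht hc (lt_of_lt_of_le hdist (min_le_right _ _))
    have hnn : 0 ≤ (eVariationOn σ (Set.Icc t t₀)).toReal := ENNReal.toReal_nonneg
    rw [abs_of_nonpos (by linarith [heq])]
    linarith [heq]

end Work4
section Work5
universe u864
variable {X : Type u864} [MetricSpace X]

lemma ratio_le_log_sub {a c : ℝ} (ha : 0 < a) (hac : a ≤ c) :
    (c - a) / c ≤ Real.log c - Real.log a := by
  have hc : 0 < c := lt_of_lt_of_le ha hac
  have h1 := Real.log_le_sub_one_of_pos (show (0:ℝ) < a / c by positivity)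
  rw [Real.log_div ha.ne' hc.ne'] at h1
  have h2 : a / c - 1 = -((c - a) / c) := by field_simp; ring
  rw [h2] at h1
  linarith

lemma variation_fun_add {σ : ℝ → X} (hfin : eVariationOn σ (Set.Icc (0:ℝ) 1) ≠ ⊤)
    {a b : ℝ} (ha : 0 ≤ a) (hab : a ≤ b) (hb1 : b ≤ 1) :
    (eVariationOn σ (Set.Icc 0 b)).toReal =
      (eVariationOn σ (Set.Icc 0 a)).toReal + (eVariationOn σ (Set.Icc a b)).toReal := by
  rw [← ENNReal.toReal_add (icc_variation_ne_top hfin le_rfl (hab.trans hb1))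
    (icc_variation_ne_top hfin ha hb1), icc_variation_add σ ha hab]

set_option maxHeartbeats 2000000 in
/-- The fundamental upper bound for qhDist in a uniform domain. -/
lemma qhDist_le_log {G : Set X} (hGo : IsOpen G) (hGc : Gᶜ.Nonempty) {b : ℝ}
    (hunif : IsUniformDomain G b) {x y : X} (hx : x ∈ G) (hy : y ∈ G) :
    qhDist G x y ≤ ENNReal.ofReal (6 * max b 1 *
      Real.log (1 + max b 1 * dist x y / min (bdist G x) (bdist G y))) := by
  set M : ℝ := max b 1 with hMdef
  have hM : 1 ≤ M := le_max_right _ _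
  have hM0 : 0 < M := lt_of_lt_of_le one_pos hM
  set δ₀ : ℝ := min (bdist G x) (bdist G y) with hδ₀def
  have hδ₀ : 0 < δ₀ := lt_min (bdist_pos hGo hGc hx) (bdist_pos hGo hGc hy)
  obtain ⟨σ, hσcurve, hσ0, hσ1, hcone, hlen⟩ := hunif x hx y hy
  have hσc : ContinuousOn σ (Set.Icc 0 1) := hσcurve.1
  have hVle : eVariationOn σ (Set.Icc (0:ℝ) 1) ≤ ENNReal.ofReal (M * dist x y) :=
    hlen.trans (ENNReal.ofReal_le_ofReal
      (mul_le_mul_of_nonneg_right (le_max_left b 1) dist_nonneg))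
  have hVfin : eVariationOn σ (Set.Icc (0:ℝ) 1) ≠ ⊤ :=
    ne_top_of_le_ne_top ENNReal.ofReal_ne_top hVle
  set vv : ℝ → ℝ := fun t => (eVariationOn σ (Set.Icc 0 t)).toReal with hvvdef
  set L : ℝ := vv 1 with hLdef
  have hvadd : ∀ a b' : ℝ, 0 ≤ a → a ≤ b' → b' ≤ 1 →
      vv b' = vv a + (eVariationOn σ (Set.Icc a b')).toReal :=
    fun a b' ha hab hb1 => variation_fun_add hVfin ha hab hb1
  have hvv0 : vv 0 = 0 := by
    simp only [hvvdef, Set.Icc_self]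
    rw [eVariationOn.subsingleton σ subsingleton_singleton]
    simp
  have hvmono : ∀ a b' : ℝ, 0 ≤ a → a ≤ b' → b' ≤ 1 → vv a ≤ vv b' := by
    intro a b' ha hab hb1
    rw [hvadd a b' ha hab hb1]
    simp [ENNReal.toReal_nonneg]
  have hvnn : ∀ t ∈ Set.Icc (0:ℝ) 1, 0 ≤ vv t := fun t _ => ENNReal.toReal_nonneg
  have hvL : ∀ t ∈ Set.Icc (0:ℝ) 1, vv t ≤ L := fun t ht => hvmono t 1 ht.1 ht.2 le_rfl
  have hL0 : 0 ≤ L := hvL 0 (by norm_num) |>.trans_eq' hvv0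
  have hLle : L ≤ M * dist x y := by
    have := ENNReal.toReal_mono ENNReal.ofReal_ne_top hVle
    rwa [ENNReal.toReal_ofReal (by positivity)] at this
  have hdistv : ∀ a b' : ℝ, 0 ≤ a → a ≤ b' → b' ≤ 1 →
      dist (σ a) (σ b') ≤ vv b' - vv a := by
    intro a b' ha hab hb1
    have h1 : edist (σ a) (σ b') ≤ eVariationOn σ (Set.Icc a b') :=
      eVariationOn.edist_le σ (Set.left_mem_Icc.mpr hab) (Set.right_mem_Icc.mpr hab)
    have h2 : dist (σ a) (σ b') ≤ (eVariationOn σ (Set.Icc a b')).toReal := by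
      rw [dist_edist]
      exact ENNReal.toReal_mono (icc_variation_ne_top hVfin ha hb1) h1
    rw [hvadd a b' ha hab hb1]
    linarith
  -- distance from σ t to the endpoints
  have hdx : ∀ t ∈ Set.Icc (0:ℝ) 1, dist (σ t) x ≤ vv t := by
    intro t ht
    rw [← hσ0, dist_comm]
    have := hdistv 0 t le_rfl ht.1 ht.2
    rw [hvv0] at this
    linarith
  have hdy : ∀ t ∈ Set.Icc (0:ℝ) 1, dist (σ t) y ≤ L - vv t := by
    intro t ht
    rw [← hσ1]
    have := hdistv t 1 ht.1 ht.2 le_rfl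
    linarith
  -- cone condition, real version
  have hconeR : ∀ t ∈ Set.Icc (0:ℝ) 1, min (vv t) (L - vv t) ≤ M * bdist G (σ t) := by
    intro t ht
    have hc := hcone t ht
    have hδnn : 0 ≤ bdist G (σ t) := bdist_nonneg G _
    have hco : (min (eVariationOn σ (Set.Icc 0 t)) (eVariationOn σ (Set.Icc t 1))).toReal ≤
        M * bdist G (σ t) := by
      rcases le_or_gt (b * bdist G (σ t)) 0 with hneg | hpos
      · rw [ENNReal.ofReal_of_nonpos hneg] at hc
        have := le_antisymm hc (zero_le)
        rw [this]
        positivity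
      · have h1 := ENNReal.toReal_mono ENNReal.ofReal_ne_top hc
        rw [ENNReal.toReal_ofReal hpos.le] at h1
        refine h1.trans ?_
        exact mul_le_mul_of_nonneg_right (le_max_left b 1) hδnn
    rcases min_le_iff.mp (min_le_min (le_refl (eVariationOn σ (Set.Icc 0 t)))
      (le_refl (eVariationOn σ (Set.Icc t 1)))) with _ | _
    all_goals {
      rcases le_total (eVariationOn σ (Set.Icc 0 t)) (eVariationOn σ (Set.Icc t 1)) with hmin | hmin
      · rw [min_eq_left hmin] at hco
        refine le_trans (min_le_left _ _) ?_
        have : vv t = (eVariationOn σ (Set.Icc 0 t)).toReal := rfl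
        rw [this]
        exact hco
      · rw [min_eq_right hmin] at hco
        refine le_trans (min_le_right _ _) ?_
        have : L - vv t = (eVariationOn σ (Set.Icc t 1)).toReal := by
          have := hvadd t 1 ht.1 ht.2 le_rfl
          linarith
        rw [this]
        exact hco
    }
  -- the pointwise lower bound for bdist along σ
  have hφ : ∀ t ∈ Set.Icc (0:ℝ) 1,
      (δ₀ + min (vv t) (L - vv t)) / (3 * M) ≤ bdist G (σ t) := by
    intro t ht
    set s' : ℝ := min (vv t) (L - vv t) with hs'def
    have hs'0 : 0 ≤ s' := le_min (hvnn t ht) (by have := hvL t ht; linarith)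
    have hδnn : 0 ≤ bdist G (σ t) := bdist_nonneg G _
    have hlow1 : δ₀ - s' ≤ bdist G (σ t) := by
      rcases le_total (vv t) (L - vv t) with hm | hm
      · have h1 : bdist G x ≤ bdist G (σ t) + dist x (σ t) := bdist_le_add_dist G x (σ t)
        have h2 := hdx t ht
        rw [dist_comm] at h2
        have h3 : δ₀ ≤ bdist G x := min_le_left _ _
        have : s' = vv t := min_eq_left hm
        linarith
      · have h1 : bdist G y ≤ bdist G (σ t) + dist y (σ t) := bdist_le_add_dist G y (σ t)
        have h2 := hdy t ht
        rw [dist_comm] at h2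
        have h3 : δ₀ ≤ bdist G y := min_le_right _ _
        have : s' = L - vv t := min_eq_right hm
        linarith
    have hlow2 : s' ≤ M * bdist G (σ t) := hconeR t ht
    rw [div_le_iff₀ (by positivity)]
    rcases le_total (2 * s') δ₀ with hcase | hcase
    · nlinarith [mul_le_mul_of_nonneg_left (show δ₀ - s' ≤ bdist G (σ t) from hlow1) hM0.le,
        mul_le_mul_of_nonneg_right hM (show 0 ≤ δ₀ - s' by linarith)]
    · nlinarith
  -- the comparison function Φ
  set P : ℝ := L / 2 with hPdef
  set Φ : ℝ → ℝ := fun s => if s ≤ P then 3 * M * Real.log (δ₀ + s)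
    else 3 * M * (2 * Real.log (δ₀ + P) - Real.log (δ₀ + L - s)) with hΦdef
  have hΦP : Φ P = 3 * M * Real.log (δ₀ + P) := by rw [hΦdef]; simp
  have hΦval2 : ∀ s, P ≤ s → s ≤ L →
      Φ s = 3 * M * (2 * Real.log (δ₀ + P) - Real.log (δ₀ + L - s)) := by
    intro s hPs hsL
    rw [hΦdef]
    simp only
    rcases eq_or_lt_of_le hPs with h | h
    · rw [if_pos (le_of_eq h.symm)]
      rw [← h]
      have : δ₀ + L - P = δ₀ + P := by rw [hPdef]; ring
      rw [this]
      ring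
    · rw [if_neg (not_le.mpr h)]
  have hΦmono : ∀ s s', 0 ≤ s → s ≤ s' → s' ≤ L → Φ s ≤ Φ s' := by
    intro s s' hs0 hss' hs'L
    have hsL : s ≤ L := hss'.trans hs'L
    have hs'0 : 0 ≤ s' := hs0.trans hss'
    have hstep : ∀ a a', 0 ≤ a → a ≤ a' → a' ≤ P → Φ a ≤ Φ a' := by
      intro a a' ha0 haa' ha'P
      rw [hΦdef]
      simp only
      rw [if_pos (haa'.trans ha'P), if_pos ha'P]
      have := Real.log_le_log (by positivity) (show δ₀ + a ≤ δ₀ + a' by linarith)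
      nlinarith
    have hstep2 : ∀ a a', P ≤ a → a ≤ a' → a' ≤ L → Φ a ≤ Φ a' := by
      intro a a' haP haa' ha'L
      rw [hΦval2 a haP (haa'.trans ha'L), hΦval2 a' (haP.trans haa') ha'L]
      have h1 : (0:ℝ) < δ₀ + L - a' := by linarith
      have := Real.log_le_log h1 (show δ₀ + L - a' ≤ δ₀ + L - a by linarith)
      nlinarith
    rcases le_total s' P with h | h
    · exact hstep s s' hs0 hss' h
    · rcases le_total P s with h2 | h2
      · exact hstep2 s s' h2 hss' hs'L
      · calc Φ s ≤ Φ P := hstep s P hs0 h2 le_rfl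
          _ ≤ Φ s' := hstep2 P s' le_rfl h hs'L
  -- bound every partition sum
  have hmain : qhLength G σ (Set.Icc 0 1) ≤ ENNReal.ofReal (Φ L - Φ 0) := by
    refine qhLength_le G σ _ _ (fun n u humono humem => ?_)
    set a : ℕ → ℝ := fun i => vv (u i) with hadef
    have hamono : ∀ i, a i ≤ a (i + 1) :=
      fun i => hvmono (u i) (u (i+1)) (humem i).1 (humono (Nat.le_succ i)) (humem (i+1)).2
    have ha0L : ∀ i, 0 ≤ a i ∧ a i ≤ L := fun i => ⟨hvnn _ (humem i), hvL _ (humem i)⟩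
    have hbddsup : ∀ t ∈ Set.Icc (u 0) (u 0), True := fun _ _ => trivial
    -- uniform bound for bdist along σ, for BddAbove
    have hbd : ∀ i : ℕ, ∀ t ∈ Set.Icc (u i) (u (i+1)), bdist G (σ t) ≤ bdist G x + L := by
      intro i t ht
      have htI : t ∈ Set.Icc (0:ℝ) 1 := ⟨(humem i).1.trans ht.1, ht.2.trans (humem (i+1)).2⟩
      calc bdist G (σ t) ≤ bdist G x + dist (σ t) x := bdist_le_add_dist G _ _
        _ ≤ bdist G x + L := by
            have h1 := hdx t htI
            have h2 := hvL t htI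
            linarith
    have hterm : ∀ i : ℕ, edist (σ (u (i + 1))) (σ (u i)) /
        ENNReal.ofReal (⨆ t ∈ Set.Icc (u i) (u (i + 1)), bdist G (σ t)) ≤
        ENNReal.ofReal (Φ (a (i+1)) - Φ (a i)) := by
      intro i
      have hui : u i ∈ Set.Icc (0:ℝ) 1 := humem i
      have hui1 : u (i+1) ∈ Set.Icc (0:ℝ) 1 := humem (i+1)
      have huile : u i ≤ u (i+1) := humono (Nat.le_succ i)
      -- numerator
      have hnum : edist (σ (u (i + 1))) (σ (u i)) ≤ ENNReal.ofReal (a (i+1) - a i) := by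
        rw [edist_dist, dist_comm]
        exact ENNReal.ofReal_le_ofReal (hdistv (u i) (u (i+1)) hui.1 huile hui1.2)
      -- find a witness giving a good lower bound for the sup, and the matching log bound
      have hwit : ∃ β : ℝ, ((δ₀ + β) / (3 * M) ≤
            (⨆ t ∈ Set.Icc (u i) (u (i + 1)), bdist G (σ t))) ∧ 0 < δ₀ + β ∧
            (a (i+1) - a i) * (3 * M) / (δ₀ + β) ≤ Φ (a (i+1)) - Φ (a i) := by
        rcases le_total (a (i+1)) P with hc1 | hc1
        · -- left regime : β = a (i+1)
          refine ⟨a (i+1), ?_, by have := (ha0L (i+1)).1; linarith, ?_⟩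
          · refine le_trans ?_ (le_innerSup (hbd i) (Set.right_mem_Icc.mpr huile))
            have hmin : min (vv (u (i+1))) (L - vv (u (i+1))) = a (i+1) := by
              rw [hadef]
              simp only
              refine min_eq_left ?_
              rw [hPdef] at hc1
              have : vv (u (i+1)) = a (i+1) := rfl
              linarith [hc1]
            have := hφ (u (i+1)) hui1
            rw [hmin] at this
            exact this
          · have hlog : (a (i+1) - a i) / (δ₀ + a (i+1)) ≤
                Real.log (δ₀ + a (i+1)) - Real.log (δ₀ + a i) := by
              have := ratio_le_log_sub (show (0:ℝ) < δ₀ + a i by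
                have := (ha0L i).1; linarith)
                (show δ₀ + a i ≤ δ₀ + a (i+1) by have := hamono i; linarith)
              have heq : δ₀ + a (i+1) - (δ₀ + a i) = a (i+1) - a i := by ring
              rwa [heq] at this
            have hΦeq : Φ (a (i+1)) - Φ (a i) =
                3 * M * (Real.log (δ₀ + a (i+1)) - Real.log (δ₀ + a i)) := by
              rw [hΦdef]
              simp only
              rw [if_pos hc1, if_pos ((hamono i).trans hc1)]
              ring
            rw [hΦeq]
            rw [div_le_iff₀ (by have := (ha0L (i+1)).1; positivity)] at hlog ⊢
            nlinarith [hlog]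
        · rcases le_total P (a i) with hc2 | hc2
          · -- right regime : β = L - a i
            refine ⟨L - a i, ?_, by have := (ha0L i).2; linarith, ?_⟩
            · refine le_trans ?_ (le_innerSup (hbd i) (Set.left_mem_Icc.mpr huile))
              have hmin : min (vv (u i)) (L - vv (u i)) = L - a i := by
                refine min_eq_right ?_
                rw [hPdef] at hc2
                have : vv (u i) = a i := rfl
                linarith [hc2]
              have := hφ (u i) hui
              rw [hmin] at this
              exact this
            · have := ratio_le_log_sub (show (0:ℝ) < δ₀ + L - a (i+1) by
                have := (ha0L (i+1)).2; linarith)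
                (show δ₀ + L - a (i+1) ≤ δ₀ + L - a i by have := hamono i; linarith)
              have heq : δ₀ + L - a i - (δ₀ + L - a (i+1)) = a (i+1) - a i := by ring
              rw [heq] at this
              have hΦeq : Φ (a (i+1)) - Φ (a i) =
                  3 * M * (Real.log (δ₀ + L - a i) - Real.log (δ₀ + L - a (i+1))) := by
                rw [hΦval2 (a i) hc2 (ha0L i).2,
                  hΦval2 (a (i+1)) (hc2.trans (hamono i)) (ha0L (i+1)).2]
                ring
              rw [hΦeq]
              have hden : (0:ℝ) < δ₀ + L - a i := by have := (ha0L i).2; linarith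
              have heq2 : δ₀ + (L - a i) = δ₀ + L - a i := by ring
              rw [heq2]
              rw [div_le_iff₀ hden] at this ⊢
              nlinarith [this]
          · -- straddling : β = P, use the intermediate value theorem
            have hvvc : ContinuousOn vv (Set.Icc (u i) (u (i+1))) :=
              (variation_fun_continuousOn hσc hVfin).mono
                (Set.Icc_subset_Icc hui.1 hui1.2)
            have hIVT := intermediate_value_Icc huile hvvc
            have hPmem : P ∈ Set.Icc (vv (u i)) (vv (u (i+1))) := ⟨hc2, hc1⟩
            obtain ⟨tstar, htstar, hvtstar⟩ := hIVT hPmem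
            have htstarI : tstar ∈ Set.Icc (0:ℝ) 1 :=
              ⟨hui.1.trans htstar.1, htstar.2.trans hui1.2⟩
            have hP0 : (0:ℝ) ≤ P := by rw [hPdef]; linarith
            refine ⟨P, ?_, by linarith, ?_⟩
            · refine le_trans ?_ (le_innerSup (hbd i) htstar)
              have hmin : min (vv tstar) (L - vv tstar) = P := by
                rw [hvtstar]
                rw [hPdef]
                rw [min_eq_left (by linarith)]
              have := hφ tstar htstarI
              rw [hmin] at this
              exact this
            · have hlog1 : (P - a i) / (δ₀ + P) ≤
                  Real.log (δ₀ + P) - Real.log (δ₀ + a i) := by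
                have := ratio_le_log_sub (show (0:ℝ) < δ₀ + a i by
                  have := (ha0L i).1; linarith)
                  (show δ₀ + a i ≤ δ₀ + P by linarith)
                have heq : δ₀ + P - (δ₀ + a i) = P - a i := by ring
                rwa [heq] at this
              have hlog2 : (a (i+1) - P) / (δ₀ + P) ≤
                  Real.log (δ₀ + P) - Real.log (δ₀ + L - a (i+1)) := by
                have h2 := ratio_le_log_sub (show (0:ℝ) < δ₀ + L - a (i+1) by
                  have := (ha0L (i+1)).2; linarith)
                  (show δ₀ + L - a (i+1) ≤ δ₀ + L - P by linarith)
                have heq : δ₀ + L - P - (δ₀ + L - a (i+1)) = a (i+1) - P := by ring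
                rw [heq] at h2
                have heq2 : δ₀ + L - P = δ₀ + P := by rw [hPdef]; ring
                rwa [heq2] at h2
              have hΦeq : Φ (a (i+1)) - Φ (a i) =
                  3 * M * ((Real.log (δ₀ + P) - Real.log (δ₀ + a i)) +
                    (Real.log (δ₀ + P) - Real.log (δ₀ + L - a (i+1)))) := by
                rw [hΦval2 (a (i+1)) hc1 (ha0L (i+1)).2]
                rw [hΦdef]
                simp only
                rw [if_pos hc2]
                ring
              rw [hΦeq]
              have hPpos : (0:ℝ) < δ₀ + P := by
                have : 0 ≤ P := by rw [hPdef]; linarith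
                linarith
              rw [div_le_iff₀ hPpos] at hlog1 hlog2
              rw [div_le_iff₀ hPpos]
              nlinarith [hlog1, hlog2]
      obtain ⟨β, hβsup, hβpos, hβlog⟩ := hwit
      calc edist (σ (u (i + 1))) (σ (u i)) /
            ENNReal.ofReal (⨆ t ∈ Set.Icc (u i) (u (i + 1)), bdist G (σ t))
          ≤ ENNReal.ofReal (a (i+1) - a i) / ENNReal.ofReal ((δ₀ + β) / (3 * M)) := by
            exact ENNReal.div_le_div hnum (ENNReal.ofReal_le_ofReal hβsup)
        _ = ENNReal.ofReal ((a (i+1) - a i) / ((δ₀ + β) / (3 * M))) :=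
            (ENNReal.ofReal_div_of_pos (by positivity)).symm
        _ ≤ ENNReal.ofReal (Φ (a (i+1)) - Φ (a i)) := by
            apply ENNReal.ofReal_le_ofReal
            rw [div_div_eq_mul_div]
            exact hβlog
    calc (∑ i ∈ Finset.range n, edist (σ (u (i + 1))) (σ (u i)) /
          ENNReal.ofReal (⨆ t ∈ Set.Icc (u i) (u (i + 1)), bdist G (σ t)))
        ≤ ∑ i ∈ Finset.range n, ENNReal.ofReal (Φ (a (i+1)) - Φ (a i)) :=
          Finset.sum_le_sum fun i _ => hterm i
      _ = ENNReal.ofReal (∑ i ∈ Finset.range n, (Φ (a (i+1)) - Φ (a i))) :=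
          (ENNReal.ofReal_sum_of_nonneg fun i _ => sub_nonneg.mpr
            (hΦmono (a i) (a (i+1)) (ha0L i).1 (hamono i) (ha0L (i+1)).2)).symm
      _ = ENNReal.ofReal (Φ (a n) - Φ (a 0)) := by
          rw [Finset.sum_range_sub (fun i => Φ (a i)) n]
      _ ≤ ENNReal.ofReal (Φ L - Φ 0) := by
          apply ENNReal.ofReal_le_ofReal
          have h1 := hΦmono (a n) L (ha0L n).1 (ha0L n).2 le_rfl
          have h2 := hΦmono 0 (a 0) le_rfl (ha0L 0).1 (ha0L 0).2
          linarith
  -- identify Φ L - Φ 0 and compare with the target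
  have hΦL : Φ L - Φ 0 = 6 * M * (Real.log (δ₀ + P) - Real.log δ₀) := by
    have h1 : Φ L = 3 * M * (2 * Real.log (δ₀ + P) - Real.log δ₀) := by
      have := hΦval2 L (by rw [hPdef]; linarith) le_rfl
      rw [this]
      have : δ₀ + L - L = δ₀ := by ring
      rw [this]
    have h2 : Φ 0 = 3 * M * Real.log (δ₀ + 0) := by
      rw [hΦdef]
      simp only
      rw [if_pos (by rw [hPdef]; linarith)]
    rw [h1, h2, add_zero]
    ring
  refine le_trans (qhDist_le_qhLength G σ hσcurve hσ0 hσ1) (hmain.trans ?_)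
  apply ENNReal.ofReal_le_ofReal
  rw [hΦL]
  have hlog : Real.log (δ₀ + P) - Real.log δ₀ ≤
      Real.log (1 + M * dist x y / δ₀) := by
    rw [← Real.log_div (by positivity) hδ₀.ne']
    apply Real.log_le_log (by positivity)
    rw [div_le_iff₀ hδ₀]
    have : (1 + M * dist x y / δ₀) * δ₀ = δ₀ + M * dist x y := by field_simp
    rw [this]
    have : P ≤ M * dist x y := by
      rw [hPdef]
      have hd0 : 0 ≤ M * dist x y := by positivity
      linarith
    linarith
  have h1le : (1:ℝ) ≤ 1 + M * dist x y / δ₀ := by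
    have : 0 ≤ M * dist x y / δ₀ := by positivity
    linarith
  nlinarith [hlog, Real.log_nonneg h1le]

end Work5
section Work6
universe u865
variable {X : Type u865} [MetricSpace X]

/-- Greedy chain construction along the arc. -/
lemma chain_exists {G : Set X} (hGo : IsOpen G) (hGc : Gᶜ.Nonempty)
    {γ : ℝ → X} (hγc : ContinuousOn γ (Set.Icc 0 1)) (hγG : Set.MapsTo γ (Set.Icc 0 1) G)
    {s t H ε : ℝ} (hst : s ≤ t) (hs : s ∈ Set.Icc (0:ℝ) 1) (ht : t ∈ Set.Icc (0:ℝ) 1)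
    (hH : 0 < H) (hε : 0 < ε) (Nmax : ℕ)
    (hfuel : ∀ (K : ℕ) (τ : ℕ → ℝ), Monotone τ → (∀ i, τ i ∈ Set.Icc s t) →
      (∀ i < K, ENNReal.ofReal H ≤ qhDist G (γ (τ i)) (γ (τ (i+1)))) → K ≤ Nmax) :
    ∃ (n : ℕ) (τ : ℕ → ℝ), n ≤ Nmax ∧ Monotone τ ∧ τ 0 = s ∧
      (∀ i, τ i ∈ Set.Icc s t) ∧
      (∀ i < n, ENNReal.ofReal H ≤ qhDist G (γ (τ i)) (γ (τ (i+1)))) ∧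
      (∀ i < n, dist (γ (τ i)) (γ (τ (i+1))) ≤ bdist G (γ (τ i)) * (Real.exp H - 1) + ε) ∧
      (∀ w ∈ Set.Icc (τ n) t, dist (γ (τ n)) (γ w) ≤
        bdist G (γ (τ n)) * (Real.exp H - 1)) := by
  classical
  set A : ℝ → Set ℝ := fun z =>
    {w | w ∈ Set.Icc z t ∧ ENNReal.ofReal H ≤ qhDist G (γ z) (γ w)} with hAdef
  have hsubI : ∀ z ∈ Set.Icc s t, z ∈ Set.Icc (0:ℝ) 1 :=
    fun z hz => ⟨hs.1.trans hz.1, hz.2.trans ht.2⟩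
  -- the gap estimate
  have hgap : ∀ z ∈ Set.Icc s t, (¬ (A z).Nonempty) →
      ∀ w ∈ Set.Icc z t, dist (γ z) (γ w) ≤ bdist G (γ z) * (Real.exp H - 1) := by
    intro z hz hno w hw
    have hk : qhDist G (γ z) (γ w) < ENNReal.ofReal H := by
      by_contra hk'
      push_neg at hk'
      exact hno ⟨w, hw, hk'⟩
    exact dist_le_of_qhDist_le hGo hGc (hγG (hsubI z hz)) hH.le hk.le
  -- the step
  have hstepex : ∀ z ∈ Set.Icc s t, (A z).Nonempty →
      ∃ w, w ∈ A z ∧ dist (γ z) (γ w) ≤ bdist G (γ z) * (Real.exp H - 1) + ε := by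
    intro z hz hne
    set ι := sInf (A z) with hιdef
    have hbdd : BddBelow (A z) := ⟨z, fun w hw => hw.1.1⟩
    have hιz : z ≤ ι := le_csInf hne (fun w hw => hw.1.1)
    obtain ⟨w₀, hw₀⟩ := id hne
    have hιt : ι ≤ t := (csInf_le hbdd hw₀).trans hw₀.1.2
    have hιst : ι ∈ Set.Icc s t := ⟨hz.1.trans hιz, hιt⟩
    have hιI : ι ∈ Set.Icc (0:ℝ) 1 := hsubI ι hιst
    have hct : ContinuousWithinAt γ (Set.Icc 0 1) ι := hγc ι hιI
    rw [Metric.continuousWithinAt_iff] at hct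
    obtain ⟨η, hη, hctη⟩ := hct (ε/2) (by positivity)
    have hδnn : 0 ≤ bdist G (γ z) := bdist_nonneg G _
    have hE0 : 0 ≤ Real.exp H - 1 := by
      have := Real.add_one_le_exp H
      linarith
    have hdistι : dist (γ z) (γ ι) ≤ bdist G (γ z) * (Real.exp H - 1) + ε/2 := by
      rcases eq_or_lt_of_le hιz with heq | hlt
      · rw [← heq, dist_self]
        positivity
      · set w' := max z (ι - η/2) with hw'def
        have hw'lt : w' < ι := max_lt hlt (by linarith)
        have hw'z : z ≤ w' := le_max_left _ _
        have hw'mem : w' ∈ Set.Icc z t := ⟨hw'z, hw'lt.le.trans hιt⟩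
        have hw'I : w' ∈ Set.Icc (0:ℝ) 1 :=
          hsubI w' ⟨hz.1.trans hw'z, hw'mem.2⟩
        have hw'notin : w' ∉ A z := fun hmem =>
          absurd (csInf_le hbdd hmem) (not_le.mpr hw'lt)
        have hw'k : qhDist G (γ z) (γ w') < ENNReal.ofReal H := by
          by_contra hk
          push_neg at hk
          exact hw'notin ⟨hw'mem, hk⟩
        have h1 : dist (γ z) (γ w') ≤ bdist G (γ z) * (Real.exp H - 1) :=
          dist_le_of_qhDist_le hGo hGc (hγG (hsubI z hz)) hH.le hw'k.le
        have h2 : dist (γ w') (γ ι) ≤ ε/2 := by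
          have hd : dist w' ι < η := by
            rw [Real.dist_eq, abs_of_nonpos (by linarith)]
            have : ι - η/2 ≤ w' := le_max_right _ _
            linarith
          exact (hctη hw'I hd).le
        calc dist (γ z) (γ ι) ≤ dist (γ z) (γ w') + dist (γ w') (γ ι) :=
              dist_triangle _ _ _
          _ ≤ bdist G (γ z) * (Real.exp H - 1) + ε/2 := by linarith
    obtain ⟨w, hwA, hwlt⟩ := exists_lt_of_csInf_lt hne (show ι < ι + η by linarith)
    have hwge : ι ≤ w := csInf_le hbdd hwA
    have hwI : w ∈ Set.Icc (0:ℝ) 1 := hsubI w ⟨hz.1.trans (hιz.trans hwge), hwA.1.2⟩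
    have h3 : dist (γ w) (γ ι) ≤ ε/2 := by
      have hd : dist w ι < η := by
        rw [Real.dist_eq, abs_of_nonneg (by linarith)]
        linarith
      exact (hctη hwI hd).le
    refine ⟨w, hwA, ?_⟩
    calc dist (γ z) (γ w) ≤ dist (γ z) (γ ι) + dist (γ ι) (γ w) := dist_triangle _ _ _
      _ ≤ bdist G (γ z) * (Real.exp H - 1) + ε/2 + ε/2 := by
          rw [dist_comm (γ ι)]
          linarith
      _ = bdist G (γ z) * (Real.exp H - 1) + ε := by ring
  -- iterate
  set F : ℝ → ℝ := fun z => if hz : z ∈ Set.Icc s t ∧ (A z).Nonempty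
    then (hstepex z hz.1 hz.2).choose else z with hFdef
  set τ : ℕ → ℝ := fun k => F^[k] s with hτdef
  have hτ0 : τ 0 = s := rfl
  have hτsucc : ∀ k, τ (k+1) = F (τ k) := fun k => Function.iterate_succ_apply' F k s
  have hFmem : ∀ z ∈ Set.Icc s t, F z ∈ Set.Icc s t ∧ z ≤ F z := by
    intro z hz
    rw [hFdef]
    simp only
    by_cases hcase : z ∈ Set.Icc s t ∧ (A z).Nonempty
    · rw [dif_pos hcase]
      have hspec := (hstepex z hcase.1 hcase.2).choose_spec
      have hmem := hspec.1.1
      exact ⟨⟨hz.1.trans hmem.1, hmem.2⟩, hmem.1⟩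
    · rw [dif_neg hcase]
      exact ⟨hz, le_rfl⟩
  have hτmem : ∀ k, τ k ∈ Set.Icc s t := by
    intro k
    induction k with
    | zero => exact ⟨le_rfl, hst⟩
    | succ k ih => rw [hτsucc]; exact (hFmem _ ih).1
  have hτmono : Monotone τ :=
    monotone_nat_of_le_succ (fun k => by rw [hτsucc]; exact (hFmem _ (hτmem k)).2)
  have hcoarse_step : ∀ k, (A (τ k)).Nonempty →
      (ENNReal.ofReal H ≤ qhDist G (γ (τ k)) (γ (τ (k+1)))) ∧
      dist (γ (τ k)) (γ (τ (k+1))) ≤ bdist G (γ (τ k)) * (Real.exp H - 1) + ε := by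
    intro k hne
    have hz := hτmem k
    rw [hτsucc, hFdef]
    simp only
    rw [dif_pos ⟨hz, hne⟩]
    have hspec := (hstepex (τ k) hz hne).choose_spec
    exact ⟨hspec.1.2, hspec.2⟩
  have hterm : ∃ k, k ≤ Nmax ∧ ¬ (A (τ k)).Nonempty := by
    by_contra hcon
    push_neg at hcon
    have hco : ∀ i < Nmax + 1, ENNReal.ofReal H ≤ qhDist G (γ (τ i)) (γ (τ (i+1))) :=
      fun i hi => (hcoarse_step i (hcon i (by omega))).1
    have := hfuel (Nmax+1) τ hτmono hτmem hco
    omega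
  set n := Nat.find hterm with hndef
  obtain ⟨hnN, hnact⟩ := Nat.find_spec hterm
  have hact : ∀ i < n, (A (τ i)).Nonempty := by
    intro i hi
    have hmin := Nat.find_min hterm hi
    push_neg at hmin
    exact hmin (le_trans (le_of_lt hi) hnN)
  exact ⟨n, τ, hnN, hτmono, hτ0, hτmem,
    fun i hi => (hcoarse_step i (hact i hi)).1,
    fun i hi => (hcoarse_step i (hact i hi)).2,
    hgap (τ n) (hτmem n) hnact⟩

lemma chain_le_coarse (G : Set X) (γ : ℝ → X) (s : Set ℝ) (h : ℝ) (K : ℕ) (τ : ℕ → ℝ)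
    (hK : 1 ≤ K) (hmono : Monotone τ) (hmem : ∀ i, τ i ∈ s)
    (hco : ∀ i < K, ENNReal.ofReal h ≤ qhDist G (γ (τ i)) (γ (τ (i+1)))) :
    (∑ i ∈ Finset.range K, qhDist G (γ (τ i)) (γ (τ (i+1)))) ≤ coarseQHLength G γ s h :=
  le_iSup (fun p : { q : ℕ × (ℕ → ℝ) // 1 ≤ q.1 ∧ Monotone q.2 ∧ (∀ i, q.2 i ∈ s) ∧
      ∀ i < q.1, ENNReal.ofReal h ≤ qhDist G (γ (q.2 i)) (γ (q.2 (i + 1))) } =>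
    ∑ i ∈ Finset.range p.1.1, qhDist G (γ (p.1.2 i)) (γ (p.1.2 (i + 1))))
    ⟨(K, τ), hK, hmono, hmem, hco⟩

lemma sum_geom_aux {H : ℝ} (hH : 1 ≤ H) (N : ℕ) :
    (∑ m ∈ Finset.range N, ((m:ℝ)+1) * Real.exp (-(m:ℝ) * H)) ≤ 6 := by
  set q : ℝ := Real.exp (-(1:ℝ)/2) with hqdef
  have hq0 : 0 < q := Real.exp_pos _
  have hq1 : q ≤ 2/3 := by
    have he : q * Real.exp ((1:ℝ)/2) = 1 := by
      rw [hqdef, ← Real.exp_add]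
      norm_num
    have hee : Real.exp ((1:ℝ)/2) * Real.exp ((1:ℝ)/2) = Real.exp 1 := by
      rw [← Real.exp_add]; norm_num
    have h1 : (9:ℝ)/4 < Real.exp 1 := by
      have := Real.exp_one_gt_d9
      norm_num at this
      linarith
    have h2 : (3:ℝ)/2 < Real.exp ((1:ℝ)/2) := by
      nlinarith [Real.exp_pos ((1:ℝ)/2)]
    nlinarith [he, h2, hq0]
  have hterm : ∀ m : ℕ, ((m:ℝ)+1) * Real.exp (-(m:ℝ)*H) ≤ 2 * q^m := by
    intro m
    have h1 : Real.exp (-(m:ℝ)*H) ≤ Real.exp (-(m:ℝ)) := by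
      apply Real.exp_le_exp.mpr
      nlinarith [Nat.cast_nonneg (α := ℝ) m]
    have h2 : ((m:ℝ)+1) ≤ 2 * Real.exp ((m:ℝ)/2) := by
      have := Real.add_one_le_exp ((m:ℝ)/2)
      nlinarith [Nat.cast_nonneg (α := ℝ) m]
    have h3 : Real.exp ((m:ℝ)/2) * Real.exp (-(m:ℝ)) = q^m := by
      rw [← Real.exp_add, hqdef, ← Real.exp_nat_mul]
      congr 1
      push_cast
      ring
    calc ((m:ℝ)+1) * Real.exp (-(m:ℝ)*H) ≤ ((m:ℝ)+1) * Real.exp (-(m:ℝ)) := by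
          apply mul_le_mul_of_nonneg_left h1 (by positivity)
      _ ≤ (2 * Real.exp ((m:ℝ)/2)) * Real.exp (-(m:ℝ)) := by
          apply mul_le_mul_of_nonneg_right h2 (Real.exp_pos _).le
      _ = 2 * q^m := by rw [mul_assoc, h3]
  calc (∑ m ∈ Finset.range N, ((m:ℝ)+1) * Real.exp (-(m:ℝ) * H))
      ≤ ∑ m ∈ Finset.range N, 2 * q^m := Finset.sum_le_sum fun m _ => hterm m
    _ = 2 * ∑ m ∈ Finset.range N, q^m := by rw [Finset.mul_sum]
    _ ≤ 2 * (1 / (1 - q)) := by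
        have h1q : 0 < 1 - q := by linarith
        have hgeom : (∑ m ∈ Finset.range N, q^m) ≤ 1 / (1 - q) := by
          have heq : (∑ m ∈ Finset.range N, q^m) = (1 - q^N)/(1 - q) := by
            rw [geom_sum_eq (by intro hq; rw [hq] at hq1; norm_num at hq1 : q ≠ 1)]
            rw [div_eq_div_iff (sub_ne_zero.mpr (by intro hq; rw [hq] at hq1; norm_num at hq1))
              (sub_ne_zero.mpr (by intro hq; rw [← hq] at hq1; norm_num at hq1))]
            ring
          rw [heq]
          rw [div_le_div_iff₀ h1q h1q]
          have hqN : 0 ≤ q^N := by positivity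
          nlinarith
        linarith [hgeom]
    _ ≤ 6 := by
        have h1q : (1:ℝ)/3 ≤ 1 - q := by linarith
        have : 1 / (1 - q) ≤ 3 := by
          rw [div_le_iff₀ (by linarith)]
          linarith
        linarith

lemma final_calc {C M w : ℝ} (hC : 1 ≤ C) (hM : 1 ≤ M) (hw : 0 ≤ w)
    (hineq : w ≤ C * (1 + Real.log (1 + M * w))) :
    w ≤ (4/3) * C * (Real.log (1+M) + Real.log (4*C)) + 1/3 := by
  have hMw : 0 ≤ M * w := by positivity
  have h1 : Real.log (1 + M * w) ≤ Real.log (1+M) + Real.log (1+w) := by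
    rw [← Real.log_mul (by linarith) (by linarith)]
    apply Real.log_le_log (by linarith)
    nlinarith
  have h2 : Real.log (1 + w) ≤ (1+w)/(4*C) + Real.log (4*C) - 1 := by
    have h3 := Real.log_le_sub_one_of_pos (show (0:ℝ) < (1+w)/(4*C) by positivity)
    rw [Real.log_div (by linarith) (by positivity)] at h3
    linarith
  have h4 : w ≤ C * (Real.log (1+M) + Real.log (4*C)) + (1+w)/4 := by
    have h5 : w ≤ C * (Real.log (1+M) + (1+w)/(4*C) + Real.log (4*C)) := by
      calc w ≤ C * (1 + Real.log (1 + M * w)) := hineq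
        _ ≤ C * (1 + (Real.log (1+M) + ((1+w)/(4*C) + Real.log (4*C) - 1))) := by
            apply mul_le_mul_of_nonneg_left ?_ (by linarith)
            linarith
        _ = C * (Real.log (1+M) + (1+w)/(4*C) + Real.log (4*C)) := by ring
    have h6 : C * ((1+w)/(4*C)) = (1+w)/4 := by
      field_simp
    calc w ≤ C * (Real.log (1+M) + (1+w)/(4*C) + Real.log (4*C)) := h5
      _ = C * (Real.log (1+M) + Real.log (4*C)) + C * ((1+w)/(4*C)) := by ring
      _ = C * (Real.log (1+M) + Real.log (4*C)) + (1+w)/4 := by rw [h6]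
  linarith

end Work6
set_option maxHeartbeats 2000000 in
/-- diameter bound for solid arcs lying close to the boundary of a
uniform domain. -/
theorem diam_solid_arc_near_boundary (b ν h : ℝ) (hν : 1 ≤ ν) (hh : 0 ≤ h) :
    ∃ M₁ : ℝ, ∀ (X : Type u) [MetricSpace X],
      IsRectifiablyConnectedSpace X →
      ∀ G : Set X, IsProperDomain G → IsUniformDomain G b →
      ∀ (r : ℝ) (γ : ℝ → X), IsSolidArcIn G γ ν h →
        (∀ t ∈ Set.Icc (0:ℝ) 1, bdist G (γ t) ≤ r) →
        EMetric.diam (γ '' Set.Icc 0 1) ≤ ENNReal.ofReal (M₁ * r) := by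
  classical
  set M : ℝ := max b 1 with hMdef
  set H : ℝ := h + 1 with hHdef
  set Ee : ℝ := Real.exp H - 1 with hEedef
  set A : ℝ := 6 * M with hAdef
  set C9 : ℝ := 6 * Ee * (ν * A + 1) + 1 + Ee with hC9def
  refine ⟨(4/3) * C9 * (Real.log (1+M) + Real.log (4*C9)) + 1/3, ?_⟩
  intro X _inst _hrect G hdom hunif r γ hsolid hr
  -- basic constants
  have hM1 : 1 ≤ M := le_max_right _ _
  have hM0 : 0 < M := lt_of_lt_of_le one_pos hM1
  have hHpos : 0 < H := by rw [hHdef]; linarith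
  have hH1 : 1 ≤ H := by rw [hHdef]; linarith
  have hhH : h ≤ H := by rw [hHdef]; linarith
  have hEe0 : 0 < Ee := by
    have := Real.add_one_le_exp H
    rw [hEedef]; linarith
  have hA0 : 0 < A := by rw [hAdef]; positivity
  have hC91 : 1 ≤ C9 := by
    rw [hC9def]
    have hνA : (0:ℝ) < ν * A := mul_pos (lt_of_lt_of_le one_pos hν) hA0
    nlinarith [mul_pos hEe0 hνA]
  have hC90 : 0 < C9 := lt_of_lt_of_le one_pos hC91
  -- domain data
  obtain ⟨hGo, _, hGuniv⟩ := hdom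
  have hGc : Gᶜ.Nonempty := Set.nonempty_compl.mpr hGuniv
  obtain ⟨hγcurve, hγinj, hsol⟩ := hsolid
  have hγc : ContinuousOn γ (Set.Icc 0 1) := hγcurve.1
  have hγG : Set.MapsTo γ (Set.Icc 0 1) G := hγcurve.2
  -- the image is compact hence has finite diameter
  have hcomp : IsCompact (γ '' Set.Icc 0 1) := isCompact_Icc.image_of_continuousOn hγc
  have hdiamfin : EMetric.diam (γ '' Set.Icc 0 1) ≠ ⊤ :=
    Metric.isBounded_iff_ediam_ne_top.mp hcomp.isBounded
  set D : ℝ := (EMetric.diam (γ '' Set.Icc 0 1)).toReal with hDdef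
  have hD0 : 0 ≤ D := ENNReal.toReal_nonneg
  have hdistD : ∀ p q : ℝ, p ∈ Set.Icc (0:ℝ) 1 → q ∈ Set.Icc (0:ℝ) 1 →
      dist (γ p) (γ q) ≤ D := by
    intro p q hp hq
    have h1 : edist (γ p) (γ q) ≤ EMetric.diam (γ '' Set.Icc 0 1) :=
      EMetric.edist_le_diam_of_mem (Set.mem_image_of_mem γ hp) (Set.mem_image_of_mem γ hq)
    rw [dist_edist]
    exact ENNReal.toReal_mono hdiamfin h1
  -- minimum of bdist along the arc
  obtain ⟨tmin, htminI, htminmin⟩ := isCompact_Icc.exists_isMinOn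
    (Set.nonempty_Icc.mpr zero_le_one) ((bdist_continuous G).comp_continuousOn hγc)
  set δmin : ℝ := bdist G (γ tmin) with hδmindef
  have hδmin : 0 < δmin := bdist_pos hGo hGc (hγG htminI)
  have hδminle : ∀ u ∈ Set.Icc (0:ℝ) 1, δmin ≤ bdist G (γ u) :=
    fun u hu => isMinOn_iff.mp htminmin u hu
  have hrpos : 0 < r := lt_of_lt_of_le hδmin (hr tmin htminI)
  -- the key qh upper bound between points of the arc
  have hKlem : ∀ p q : ℝ, p ∈ Set.Icc (0:ℝ) 1 → q ∈ Set.Icc (0:ℝ) 1 → ∀ δlo : ℝ, 0 < δlo →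
      δlo ≤ bdist G (γ p) → δlo ≤ bdist G (γ q) →
      qhDist G (γ p) (γ q) ≤ ENNReal.ofReal (A * Real.log (1 + M * D / δlo)) := by
    intro p q hp hq δlo hδlo hlp hlq
    refine (qhDist_le_log hGo hGc hunif (hγG hp) (hγG hq)).trans
      (ENNReal.ofReal_le_ofReal ?_)
    have hmin : δlo ≤ min (bdist G (γ p)) (bdist G (γ q)) := le_min hlp hlq
    have hminpos : 0 < min (bdist G (γ p)) (bdist G (γ q)) := lt_of_lt_of_le hδlo hmin
    have harg : M * dist (γ p) (γ q) / min (bdist G (γ p)) (bdist G (γ q)) ≤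
        M * D / δlo := by
      apply div_le_div₀ (by positivity)
        (mul_le_mul_of_nonneg_left (hdistD p q hp hq) hM0.le) hδlo hmin
    have hpos1 : (0:ℝ) <
        1 + M * dist (γ p) (γ q) / min (bdist G (γ p)) (bdist G (γ q)) := by
      have : 0 ≤ M * dist (γ p) (γ q) / min (bdist G (γ p)) (bdist G (γ q)) :=
        div_nonneg (by positivity) hminpos.le
      linarith
    have hlog := Real.log_le_log hpos1 (show _ ≤ 1 + M * D / δlo by linarith)
    rw [hAdef]
    exact mul_le_mul_of_nonneg_left hlog (by positivity)
  -- fuel bound from solidity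
  set Kbar : ℝ := A * Real.log (1 + M * D / δmin) with hKbardef
  have hKbar0 : 0 ≤ Kbar := by
    rw [hKbardef]
    have : (0:ℝ) ≤ Real.log (1 + M * D / δmin) :=
      Real.log_nonneg (by
        have : 0 ≤ M * D / δmin := by positivity
        linarith)
    positivity
  set Nbar : ℕ := ⌊ν * Kbar⌋₊ with hNbardef
  have hfuel : ∀ p q : ℝ, p ∈ Set.Icc (0:ℝ) 1 → q ∈ Set.Icc (0:ℝ) 1 → p ≤ q →
      ∀ (K : ℕ) (τ : ℕ → ℝ), Monotone τ → (∀ i, τ i ∈ Set.Icc p q) →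
      (∀ i < K, ENNReal.ofReal H ≤ qhDist G (γ (τ i)) (γ (τ (i+1)))) → K ≤ Nbar := by
    intro p q hp hq hpq K τ hmono hmem hco
    rcases Nat.eq_zero_or_pos K with h0 | hKpos
    · simp [h0]
    have hchain := chain_le_coarse G γ (Set.Icc p q) h K τ hKpos hmono hmem
      (fun i hi => le_trans (ENNReal.ofReal_le_ofReal hhH) (hco i hi))
    have hsum : (K : ℕ) • ENNReal.ofReal H ≤
        ∑ i ∈ Finset.range K, qhDist G (γ (τ i)) (γ (τ (i+1))) := by
      have := Finset.card_nsmul_le_sum (Finset.range K)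
        (fun i => qhDist G (γ (τ i)) (γ (τ (i+1)))) (ENNReal.ofReal H)
        (fun i hi => hco i (Finset.mem_range.mp hi))
      simpa using this
    have hsolid2 := hsol p q hp hq hpq
    have hub := hKlem p q hp hq δmin hδmin (hδminle p hp) (hδminle q hq)
    have hfinal : (K : ℕ) • ENNReal.ofReal H ≤
        ENNReal.ofReal ν * ENNReal.ofReal Kbar :=
      hsum.trans (hchain.trans (hsolid2.trans (mul_le_mul_right hub _)))
    have hKH : ENNReal.ofReal ((K:ℝ) * H) ≤ ENNReal.ofReal (ν * Kbar) := by
      calc ENNReal.ofReal ((K:ℝ) * H)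
          = ENNReal.ofReal (K:ℝ) * ENNReal.ofReal H := ENNReal.ofReal_mul (by positivity)
        _ = (K : ℕ) • ENNReal.ofReal H := by
            rw [nsmul_eq_mul, ENNReal.ofReal_natCast]
        _ ≤ ENNReal.ofReal ν * ENNReal.ofReal Kbar := hfinal
        _ = ENNReal.ofReal (ν * Kbar) := (ENNReal.ofReal_mul (by linarith)).symm
    rw [ENNReal.ofReal_le_ofReal_iff (by nlinarith)] at hKH
    have hKr : (K:ℝ) ≤ ν * Kbar := by nlinarith [hKH, Nat.cast_nonneg (α := ℝ) K]
    exact Nat.le_floor hKr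
  set lg : ℝ := Real.log (1 + M * D / r) with hlgdef
  have hlg0 : 0 ≤ lg := by
    rw [hlgdef]
    refine Real.log_nonneg ?_
    have : 0 ≤ M * D / r := by positivity
    linarith
  -- the pairwise distance bound
  have hpair : ∀ p q : ℝ, p ∈ Set.Icc (0:ℝ) 1 → q ∈ Set.Icc (0:ℝ) 1 → p ≤ q →
      dist (γ p) (γ q) ≤ C9 * (1 + lg) * r := by
    intro p q hp hq hpq
    set ε : ℝ := r / ((Nbar : ℝ) + 1) with hεdef
    have hεpos : 0 < ε := by rw [hεdef]; positivity
    obtain ⟨n, τ, hnN, hτmono, hτ0, hτmem, hτco, hτd, hτgap⟩ :=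
      chain_exists hGo hGc hγc hγG hpq hp hq hHpos hεpos Nbar (hfuel p q hp hq hpq)
    have hτI : ∀ i, τ i ∈ Set.Icc (0:ℝ) 1 :=
      fun i => ⟨hp.1.trans (hτmem i).1, (hτmem i).2.trans hq.2⟩
    set dl : ℕ → ℝ := fun i => bdist G (γ (τ i)) with hdldef
    have hdlpos : ∀ i, 0 < dl i := fun i => bdist_pos hGo hGc (hγG (hτI i))
    have hdlr : ∀ i, dl i ≤ r := fun i => hr (τ i) (hτI i)
    -- level decomposition
    have hZ : (∑ i ∈ Finset.range n, dl i) ≤ 6 * (ν * A + 1) * (1 + lg) * r := by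
      set lvl : ℕ → ℕ := fun i => ⌊Real.log (r / dl i) / H⌋₊ with hlvldef
      have hlognn : ∀ i, 0 ≤ Real.log (r / dl i) := by
        intro i
        refine Real.log_nonneg ?_
        rw [le_div_iff₀ (hdlpos i)]
        linarith [hdlr i]
      have hup : ∀ i, dl i ≤ r * Real.exp (-(lvl i : ℝ) * H) := by
        intro i
        have h1 : (lvl i : ℝ) * H ≤ Real.log (r / dl i) := by
          have hfl := Nat.floor_le (div_nonneg (hlognn i) hHpos.le)
          calc (lvl i : ℝ) * H ≤ (Real.log (r / dl i) / H) * H :=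
                mul_le_mul_of_nonneg_right hfl hHpos.le
            _ = Real.log (r / dl i) := by field_simp
        have h2 : Real.exp ((lvl i : ℝ) * H) ≤ r / dl i := by
          rw [← Real.exp_log (div_pos hrpos (hdlpos i))]
          exact Real.exp_le_exp.mpr h1
        have h3 : Real.exp ((lvl i : ℝ) * H) * dl i ≤ r := (le_div_iff₀ (hdlpos i)).mp h2
        have h4 : Real.exp (-(lvl i : ℝ) * H) = (Real.exp ((lvl i:ℝ) * H))⁻¹ := by
          rw [← Real.exp_neg]
          ring_nf
        rw [h4, ← div_eq_mul_inv, le_div_iff₀ (Real.exp_pos _)]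
        linarith [h3]
      have hdown : ∀ i, r * Real.exp (-((lvl i : ℝ)+1) * H) ≤ dl i := by
        intro i
        have h1 : Real.log (r / dl i) < ((lvl i : ℝ)+1) * H := by
          have hfl := Nat.lt_floor_add_one (Real.log (r / dl i) / H)
          calc Real.log (r / dl i) = (Real.log (r / dl i) / H) * H := by field_simp
            _ < ((lvl i : ℝ)+1) * H := mul_lt_mul_of_pos_right hfl hHpos
        have h2 : r / dl i < Real.exp (((lvl i : ℝ)+1) * H) := by
          rw [← Real.exp_log (div_pos hrpos (hdlpos i))]
          exact Real.exp_lt_exp.mpr h1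
        have h3 : r < Real.exp (((lvl i:ℝ)+1) * H) * dl i := by
          rw [div_lt_iff₀ (hdlpos i)] at h2
          linarith
        have h4 : Real.exp (-((lvl i : ℝ)+1) * H) * Real.exp (((lvl i:ℝ)+1)*H) = 1 := by
          rw [← Real.exp_add]
          ring_nf
          exact Real.exp_zero
        refine le_of_lt ?_
        calc r * Real.exp (-((lvl i : ℝ)+1) * H)
            < (Real.exp (((lvl i:ℝ)+1) * H) * dl i) * Real.exp (-((lvl i : ℝ)+1) * H) :=
              mul_lt_mul_of_pos_right h3 (Real.exp_pos _)
          _ = (Real.exp (-((lvl i : ℝ)+1) * H) * Real.exp (((lvl i:ℝ)+1)*H)) * dl i := by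
              ring
          _ = dl i := by rw [h4]; ring
      set Lmax : ℕ := ⌊Real.log (r / δmin) / H⌋₊ with hLmaxdef
      have hlvl_le : ∀ i, lvl i ≤ Lmax := by
        intro i
        apply Nat.floor_le_floor
        have h1 : r / dl i ≤ r / δmin :=
          div_le_div_of_nonneg_left hrpos.le hδmin (hδminle (τ i) (hτI i))
        have h2 := Real.log_le_log (div_pos hrpos (hdlpos i)) h1
        gcongr
      rw [← Finset.sum_fiberwise_of_maps_to
        (fun i (_ : i ∈ Finset.range n) =>
          Finset.mem_range.mpr (Nat.lt_succ_of_le (hlvl_le i))) dl]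
      have hfiber : ∀ m ∈ Finset.range (Lmax+1),
          (∑ i ∈ (Finset.range n).filter (fun i => lvl i = m), dl i) ≤
            (ν * A * (lg + (m:ℝ) + 1) + 1) * (r * Real.exp (-(m:ℝ) * H)) := by
        intro m _
        set F := (Finset.range n).filter (fun i => lvl i = m) with hFdef
        have hνA0 : (0:ℝ) ≤ ν * A := (mul_pos (lt_of_lt_of_le one_pos hν) hA0).le
        have hlgm1 : (0:ℝ) ≤ lg + (m:ℝ) + 1 := by positivity
        have hcoefnn : (0:ℝ) ≤ ν * A * (lg + (m:ℝ) + 1) + 1 := by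
          nlinarith [mul_nonneg hνA0 hlgm1]
        have hF_dl : ∀ i ∈ F, dl i ≤ r * Real.exp (-(m:ℝ) * H) := by
          intro i hiF
          obtain ⟨_, hlv⟩ := Finset.mem_filter.mp hiF
          have := hup i
          rwa [hlv] at this
        rcases F.eq_empty_or_nonempty with hFe | hFne
        · rw [hFe]
          simp only [Finset.sum_empty]
          positivity
        · have hi1F := F.min'_mem hFne
          have hi2F := F.max'_mem hFne
          set i1 := F.min' hFne with hi1def
          set i2 := F.max' hFne with hi2def
          have hi12 : i1 ≤ i2 := F.min'_le _ hi2F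
          have hi2n : i2 < n := Finset.mem_range.mp (Finset.mem_filter.mp hi2F).1
          have hlv1 : lvl i1 = m := (Finset.mem_filter.mp hi1F).2
          have hlv2 : lvl i2 = m := (Finset.mem_filter.mp hi2F).2
          have hcard : (F.card : ℝ) ≤ ((i2 - i1 : ℕ) : ℝ) + 1 := by
            have hsub : F ⊆ Finset.Icc i1 i2 :=
              fun j hj => Finset.mem_Icc.mpr ⟨F.min'_le j hj, F.le_max' j hj⟩
            have hc := Finset.card_le_card hsub
            rw [Nat.card_Icc] at hc
            have : F.card ≤ (i2 - i1) + 1 := by omega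
            exact_mod_cast this
          have hcount : ((i2 - i1 : ℕ) : ℝ) ≤ ν * A * (lg + (m:ℝ) + 1) := by
            rcases eq_or_lt_of_le hi12 with heq | hlt
            · rw [← heq]
              simp only [Nat.sub_self, Nat.cast_zero]
              nlinarith [mul_nonneg hνA0 hlgm1]
            · set K' : ℕ := i2 - i1 with hK'def
              have hK'1 : 1 ≤ K' := by omega
              set σn : ℕ → ℝ := fun j => τ (min (i1 + j) i2) with hσndef
              have hσnmono : Monotone σn := fun j j' hjj' =>
                hτmono (min_le_min (by omega) le_rfl)
              have hσnmem : ∀ j, σn j ∈ Set.Icc (τ i1) (τ i2) :=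
                fun j => ⟨hτmono (le_min (by omega) hi12), hτmono (min_le_right _ _)⟩
              have hmins : ∀ j < K', min (i1 + j) i2 = i1 + j ∧
                  min (i1 + (j+1)) i2 = i1 + (j+1) := by
                intro j hj
                constructor <;> (apply min_eq_left; omega)
              have hσnco : ∀ j < K', ENNReal.ofReal H ≤
                  qhDist G (γ (σn j)) (γ (σn (j+1))) := by
                intro j hj
                obtain ⟨hm1, hm2⟩ := hmins j hj
                have : σn j = τ (i1 + j) := by rw [hσndef]; simp only; rw [hm1]
                rw [this]
                have h2 : σn (j+1) = τ (i1 + j + 1) := by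
                  rw [hσndef]; simp only; rw [hm2]; ring_nf
                rw [h2]
                exact hτco (i1 + j) (by omega)
              have hchain := chain_le_coarse G γ (Set.Icc (τ i1) (τ i2)) h K' σn hK'1
                hσnmono hσnmem
                (fun j hj => le_trans (ENNReal.ofReal_le_ofReal hhH) (hσnco j hj))
              have hsum : (K' : ℕ) • ENNReal.ofReal H ≤
                  ∑ j ∈ Finset.range K', qhDist G (γ (σn j)) (γ (σn (j+1))) := by
                have := Finset.card_nsmul_le_sum (Finset.range K')
                  (fun j => qhDist G (γ (σn j)) (γ (σn (j+1)))) (ENNReal.ofReal H)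
                  (fun j hj => hσnco j (Finset.mem_range.mp hj))
                simpa using this
              have hsolid2 := hsol (τ i1) (τ i2) (hτI i1) (hτI i2) (hτmono hi12)
              set δlo : ℝ := r * Real.exp (-((m:ℝ)+1) * H) with hδlodef
              have hδlopos : 0 < δlo := by rw [hδlodef]; positivity
              have hlo1 : δlo ≤ bdist G (γ (τ i1)) := by
                have := hdown i1
                rwa [hlv1] at this
              have hlo2 : δlo ≤ bdist G (γ (τ i2)) := by
                have := hdown i2
                rwa [hlv2] at this
              have hub := hKlem (τ i1) (τ i2) (hτI i1) (hτI i2) δlo hδlopos hlo1 hlo2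
              have hlogm : Real.log (1 + M * D / δlo) ≤ lg + ((m:ℝ)+1) * H := by
                have he1 : (1:ℝ) ≤ Real.exp (((m:ℝ)+1) * H) :=
                  Real.one_le_exp (by positivity)
                have hQ : 0 ≤ M * D / r := by positivity
                have hrw : M * D / δlo = (M * D / r) * Real.exp (((m:ℝ)+1) * H) := by
                  rw [hδlodef]
                  have hne : -((m:ℝ)+1) * H = -(((m:ℝ)+1) * H) := by ring
                  rw [hne, Real.exp_neg]
                  field_simp
                rw [hrw]
                have h1 : 1 + (M*D/r) * Real.exp (((m:ℝ)+1)*H) ≤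
                    (1 + M*D/r) * Real.exp (((m:ℝ)+1)*H) := by nlinarith
                calc Real.log (1 + (M*D/r) * Real.exp (((m:ℝ)+1)*H))
                    ≤ Real.log ((1 + M*D/r) * Real.exp (((m:ℝ)+1)*H)) :=
                      Real.log_le_log (by nlinarith) h1
                  _ = lg + ((m:ℝ)+1) * H := by
                      rw [Real.log_mul (by linarith) (Real.exp_ne_zero _),
                        Real.log_exp, hlgdef]
              have hfinal : (K' : ℕ) • ENNReal.ofReal H ≤
                  ENNReal.ofReal ν * ENNReal.ofReal (A * Real.log (1 + M * D / δlo)) :=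
                hsum.trans (hchain.trans (hsolid2.trans (mul_le_mul_right hub _)))
              have hKbar2nn : 0 ≤ A * Real.log (1 + M * D / δlo) := by
                have : 0 ≤ Real.log (1 + M * D / δlo) := Real.log_nonneg (by
                  have : 0 ≤ M * D / δlo := by positivity
                  linarith)
                positivity
              have hKH : (K':ℝ) * H ≤ ν * (A * Real.log (1 + M * D / δlo)) := by
                have h5 : ENNReal.ofReal ((K':ℝ) * H) ≤
                    ENNReal.ofReal (ν * (A * Real.log (1 + M * D / δlo))) := by
                  calc ENNReal.ofReal ((K':ℝ) * H)
                      = ENNReal.ofReal (K':ℝ) * ENNReal.ofReal H :=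
                        ENNReal.ofReal_mul (by positivity)
                    _ = (K' : ℕ) • ENNReal.ofReal H := by
                        rw [nsmul_eq_mul, ENNReal.ofReal_natCast]
                    _ ≤ ENNReal.ofReal ν * ENNReal.ofReal (A * Real.log (1 + M * D / δlo)) :=
                        hfinal
                    _ = ENNReal.ofReal (ν * (A * Real.log (1 + M * D / δlo))) :=
                        (ENNReal.ofReal_mul (by linarith)).symm
                rw [ENNReal.ofReal_le_ofReal_iff (by nlinarith)] at h5
                exact h5
              have hKH2 : (K':ℝ) * H ≤ ν * A * (lg + ((m:ℝ)+1) * H) := by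
                have hlog2 : A * Real.log (1 + M * D / δlo) ≤ A * (lg + ((m:ℝ)+1)*H) :=
                  mul_le_mul_of_nonneg_left hlogm hA0.le
                calc (K':ℝ) * H ≤ ν * (A * Real.log (1 + M * D / δlo)) := hKH
                  _ ≤ ν * (A * (lg + ((m:ℝ)+1) * H)) :=
                      mul_le_mul_of_nonneg_left hlog2 (by linarith)
                  _ = ν * A * (lg + ((m:ℝ)+1) * H) := by ring
              -- divide by H, using lg ≤ lg * H
              have hstep : (K':ℝ) * H ≤ (ν * A * (lg + (m:ℝ) + 1)) * H := by
                have h6 : ν * A * lg ≤ ν * A * lg * H := by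
                  nlinarith [mul_nonneg (mul_nonneg (by linarith : (0:ℝ) ≤ ν) hA0.le) hlg0]
                nlinarith [hKH2]
              exact le_of_mul_le_mul_right hstep hHpos
          have hsumF : (∑ i ∈ F, dl i) ≤ (F.card : ℝ) * (r * Real.exp (-(m:ℝ)*H)) := by
            have := Finset.sum_le_card_nsmul F dl _ hF_dl
            simpa [nsmul_eq_mul] using this
          have hre : (0:ℝ) ≤ r * Real.exp (-(m:ℝ)*H) := by positivity
          calc (∑ i ∈ F, dl i) ≤ (F.card : ℝ) * (r * Real.exp (-(m:ℝ)*H)) := hsumF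
            _ ≤ (ν * A * (lg + (m:ℝ) + 1) + 1) * (r * Real.exp (-(m:ℝ) * H)) := by
                apply mul_le_mul_of_nonneg_right ?_ hre
                calc (F.card : ℝ) ≤ ((i2 - i1 : ℕ) : ℝ) + 1 := hcard
                  _ ≤ ν * A * (lg + (m:ℝ) + 1) + 1 := by linarith [hcount]
      calc (∑ m ∈ Finset.range (Lmax+1),
            ∑ i ∈ (Finset.range n).filter (fun i => lvl i = m), dl i)
          ≤ ∑ m ∈ Finset.range (Lmax+1),
              (ν * A * (lg + (m:ℝ) + 1) + 1) * (r * Real.exp (-(m:ℝ) * H)) :=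
            Finset.sum_le_sum hfiber
        _ ≤ ∑ m ∈ Finset.range (Lmax+1),
              ((ν * A + 1) * (1 + lg)) * (((m:ℝ)+1) * (r * Real.exp (-(m:ℝ) * H))) := by
            refine Finset.sum_le_sum (fun m _ => ?_)
            have hre : (0:ℝ) ≤ r * Real.exp (-(m:ℝ)*H) := by positivity
            have hm0 : (0:ℝ) ≤ (m:ℝ) := Nat.cast_nonneg m
            have hkey : ν * A * (lg + (m:ℝ) + 1) + 1 ≤
                (ν * A + 1) * (1 + lg) * ((m:ℝ)+1) := by
              have hνA : (0:ℝ) ≤ ν * A := by positivity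
              nlinarith [mul_nonneg hνA hlg0, mul_nonneg (mul_nonneg hνA hlg0) hm0,
                mul_nonneg hlg0 hm0]
            calc (ν * A * (lg + (m:ℝ) + 1) + 1) * (r * Real.exp (-(m:ℝ) * H))
                ≤ ((ν * A + 1) * (1 + lg) * ((m:ℝ)+1)) * (r * Real.exp (-(m:ℝ) * H)) :=
                  mul_le_mul_of_nonneg_right hkey hre
              _ = ((ν * A + 1) * (1 + lg)) * (((m:ℝ)+1) * (r * Real.exp (-(m:ℝ) * H))) := by
                  ring
        _ = ((ν * A + 1) * (1 + lg) * r) *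
              (∑ m ∈ Finset.range (Lmax+1), ((m:ℝ)+1) * Real.exp (-(m:ℝ) * H)) := by
            rw [Finset.mul_sum]
            refine Finset.sum_congr rfl (fun m _ => ?_)
            ring
        _ ≤ ((ν * A + 1) * (1 + lg) * r) * 6 := by
            apply mul_le_mul_of_nonneg_left (sum_geom_aux hH1 _)
            have h1 : (0:ℝ) ≤ ν * A + 1 := by positivity
            have h2 : (0:ℝ) ≤ 1 + lg := by linarith
            positivity
        _ = 6 * (ν * A + 1) * (1 + lg) * r := by ring
    -- assemble the distance bound
    have hd1 : dist (γ p) (γ (τ n)) ≤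
        ∑ i ∈ Finset.range n, dist (γ (τ i)) (γ (τ (i+1))) := by
      have := dist_le_range_sum_dist (fun i => γ (τ i)) n
      rw [hτ0] at this
      exact this
    have hd2 : (∑ i ∈ Finset.range n, dist (γ (τ i)) (γ (τ (i+1)))) ≤
        (∑ i ∈ Finset.range n, dl i) * Ee + (n:ℝ) * ε := by
      have h1 : ∀ i ∈ Finset.range n, dist (γ (τ i)) (γ (τ (i+1))) ≤ dl i * Ee + ε := by
        intro i hi
        have := hτd i (Finset.mem_range.mp hi)
        rw [hEedef]
        exact this
      calc (∑ i ∈ Finset.range n, dist (γ (τ i)) (γ (τ (i+1))))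
          ≤ ∑ i ∈ Finset.range n, (dl i * Ee + ε) := Finset.sum_le_sum h1
        _ = (∑ i ∈ Finset.range n, dl i) * Ee + (n:ℝ) * ε := by
            rw [Finset.sum_add_distrib, Finset.sum_const, ← Finset.sum_mul]
            simp only [Finset.card_range, nsmul_eq_mul]
    have hd3 : dist (γ (τ n)) (γ q) ≤ r * Ee := by
      have h1 := hτgap q ⟨(hτmem n).2, le_rfl⟩
      have h2 : bdist G (γ (τ n)) * (Real.exp H - 1) ≤ r * Ee := by
        rw [hEedef]
        exact mul_le_mul_of_nonneg_right (hdlr n) (by rw [← hEedef]; exact hEe0.le)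
      linarith
    have hnε : (n:ℝ) * ε ≤ r := by
      have h1 : (n:ℝ) ≤ (Nbar:ℝ) + 1 := by
        have : (n:ℝ) ≤ (Nbar:ℝ) := Nat.cast_le.mpr hnN
        linarith
      have h2 : ((Nbar:ℝ) + 1) * ε = r := by
        rw [hεdef]
        field_simp
      calc (n:ℝ) * ε ≤ ((Nbar:ℝ) + 1) * ε := mul_le_mul_of_nonneg_right h1 hεpos.le
        _ = r := h2
    calc dist (γ p) (γ q) ≤ dist (γ p) (γ (τ n)) + dist (γ (τ n)) (γ q) :=
          dist_triangle _ _ _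
      _ ≤ ((∑ i ∈ Finset.range n, dl i) * Ee + (n:ℝ) * ε) + r * Ee := by
          have := hd1.trans hd2
          linarith
      _ ≤ (6 * (ν * A + 1) * (1 + lg) * r) * Ee + r + r * Ee := by
          have h1 : (∑ i ∈ Finset.range n, dl i) * Ee ≤
              (6 * (ν * A + 1) * (1 + lg) * r) * Ee :=
            mul_le_mul_of_nonneg_right hZ hEe0.le
          linarith
      _ ≤ C9 * (1 + lg) * r := by
          rw [hC9def]
          have h1 : (0:ℝ) ≤ ν * A := by positivity
          nlinarith [mul_nonneg hrpos.le hlg0, mul_nonneg (mul_nonneg hEe0.le hrpos.le) hlg0,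
            mul_nonneg (mul_nonneg (mul_nonneg h1 hEe0.le) hrpos.le) hlg0]
  -- diameter bound
  have hdiam_le : EMetric.diam (γ '' Set.Icc 0 1) ≤ ENNReal.ofReal (C9 * (1 + lg) * r) := by
    refine EMetric.diam_le ?_
    rintro - ⟨p, hp, rfl⟩ - ⟨q, hq, rfl⟩
    rw [edist_dist]
    apply ENNReal.ofReal_le_ofReal
    rcases le_total p q with hpq | hpq
    · exact hpair p q hp hq hpq
    · rw [dist_comm]
      exact hpair q p hq hp hpq
  have hDle : D ≤ C9 * (1 + lg) * r := by
    have h1 := ENNReal.toReal_mono ENNReal.ofReal_ne_top hdiam_le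
    rw [ENNReal.toReal_ofReal (by
      have h2 : (0:ℝ) ≤ 1 + lg := by linarith
      positivity)] at h1
    exact h1
  -- final calculus
  have hw : D / r ≤ (4/3) * C9 * (Real.log (1+M) + Real.log (4*C9)) + 1/3 := by
    refine final_calc hC91 hM1 (by positivity) ?_
    have h1 : M * (D / r) = M * D / r := by ring
    rw [h1, ← hlgdef]
    rw [div_le_iff₀ hrpos]
    calc D ≤ C9 * (1 + lg) * r := hDle
      _ = C9 * (1 + lg) * r := rfl
  have hDfin : D ≤ ((4/3) * C9 * (Real.log (1+M) + Real.log (4*C9)) + 1/3) * r := by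
    rw [← div_le_iff₀ hrpos] at *
    · exact hw
  calc EMetric.diam (γ '' Set.Icc 0 1) = ENNReal.ofReal D :=
        (ENNReal.ofReal_toReal hdiamfin).symm
    _ ≤ ENNReal.ofReal (((4/3) * C9 * (Real.log (1+M) + Real.log (4*C9)) + 1/3) * r) :=
        ENNReal.ofReal_le_ofReal hDfin
end

section
/- Suppose that X is a c-quasiconvex metric space and that f : X → Y is a weakly H-quasisymmetric homeomorphism. Then there is an increasing function θ = θ_{c,H} : (0,∞) → (0,∞), depending only on c and H, such that if x, y, z are distinct points in X with |y−x| ≤ t|z−x| for some t > 0, then |f(y)−f(x)| ≤ θ(t)|f(z)−f(x)|. -/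
open Set Metric ENNReal Filter

universe u v

/-- a weakly quasisymmetric homeomorphism from a quasiconvex space
satisfies a quasisymmetry-type inequality with a control function `θ = θ_{c,H}`. -/
theorem weakQS_control_function (c H : ℝ) (hc : 1 ≤ c) :
    ∃ θ : ℝ → ℝ, MonotoneOn θ (Set.Ioi 0) ∧ (∀ t : ℝ, 0 < t → 0 < θ t) ∧
      ∀ (X : Type u) (Y : Type v) [MetricSpace X] [MetricSpace Y] (f : X ≃ₜ Y),
        IsCQuasiconvex (Set.univ : Set X) c →
        WeaklyQSOn (⇑f) Set.univ H →
        ∀ x y z : X, x ≠ y → x ≠ z → y ≠ z →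
        ∀ t : ℝ, 0 < t → dist y x ≤ t * dist z x →
          dist (f y) (f x) ≤ θ t * dist (f z) (f x) := by
  set H' : ℝ := max H 1 with hH'def
  have hH1 : (1:ℝ) ≤ H' := le_max_right H 1
  have hHH : H ≤ H' := le_max_left H 1
  have hb1 : (1:ℝ) ≤ 1 + H' := by linarith
  refine ⟨fun t => (1 + H') ^ (⌈2 * c * t⌉₊), ?_, ?_, ?_⟩
  · intro s _ t _ hst
    have : (2*c*s) ≤ 2*c*t := by nlinarith
    exact pow_le_pow_right₀ hb1 (Nat.ceil_mono this)
  · intro t _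
    positivity
  intro X Y _ _ f hqc hqs x y z hxy hxz hyz t ht hdist
  set r := dist z x with hrdef
  have hr0 : 0 < r := dist_pos.mpr (Ne.symm hxz)
  set R := dist (f z) (f x) with hRdef
  have hR0 : 0 ≤ R := dist_nonneg
  -- key step
  have key : ∀ u u' : X, dist u u' ≤ r/2 →
      dist (f u') (f x) ≤ (1+H') * dist (f u) (f x) + H' * R := by
    intro u u' huu
    have htri : r ≤ dist u z + dist u x := by
      have := dist_triangle z u x
      rw [dist_comm z u] at this
      linarith [this]
    rcases le_total (dist u x) (dist u z) with hmx | hmx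
    · have h1 : dist u u' ≤ dist u z := by linarith
      have h2 : dist (f u) (f u') ≤ H * dist (f u) (f z) :=
        hqs u trivial u' trivial z trivial h1
      have h3 : dist (f u) (f z) ≤ dist (f u) (f x) + R := by
        have := dist_triangle (f u) (f x) (f z)
        rw [dist_comm (f x) (f z)] at this
        linarith
      have h4 : dist (f u') (f x) ≤ dist (f u) (f u') + dist (f u) (f x) := by
        have := dist_triangle (f u') (f u) (f x)
        rw [dist_comm (f u') (f u)] at this
        linarith
      have h5 : H * dist (f u) (f z) ≤ H' * dist (f u) (f z) :=
        mul_le_mul_of_nonneg_right hHH dist_nonneg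
      have h6 : H' * dist (f u) (f z) ≤ H' * (dist (f u) (f x) + R) :=
        mul_le_mul_of_nonneg_left h3 (by linarith)
      nlinarith [dist_nonneg (x := f u) (y := f x)]
    · have h1 : dist u u' ≤ dist u x := by linarith
      have h2 : dist (f u) (f u') ≤ H * dist (f u) (f x) :=
        hqs u trivial u' trivial x trivial h1
      have h4 : dist (f u') (f x) ≤ dist (f u) (f u') + dist (f u) (f x) := by
        have := dist_triangle (f u') (f u) (f x)
        rw [dist_comm (f u') (f u)] at this
        linarith
      have h5 : H * dist (f u) (f x) ≤ H' * dist (f u) (f x) :=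
        mul_le_mul_of_nonneg_right hHH dist_nonneg
      nlinarith [dist_nonneg (x := f u) (y := f x)]
  -- main induction
  have main : ∀ (N : ℕ) (γ : ℝ → X), ContinuousOn γ (Set.Icc 0 1) →
      ∀ a : ℝ, a ∈ Set.Icc (0:ℝ) 1 →
      eVariationOn γ (Set.Icc a 1) ≤ ENNReal.ofReal ((N:ℝ) * (r/2)) →
      dist (f (γ 1)) (f x) ≤ (1+H')^N * dist (f (γ a)) (f x) + ((1+H')^N - 1) * R := by
    intro N γ hcont
    induction N with
    | zero =>
      intro a ha hvar
      have hmem1 : (1:ℝ) ∈ Set.Icc a 1 := ⟨ha.2, le_refl 1⟩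
      have hmema : a ∈ Set.Icc a 1 := ⟨le_refl a, ha.2⟩
      have hed : edist (γ a) (γ 1) ≤ eVariationOn γ (Set.Icc a 1) :=
        eVariationOn.edist_le γ hmema hmem1
      have : edist (γ a) (γ 1) = 0 := by
        have h0 : ENNReal.ofReal ((0:ℕ) * (r/2)) = 0 := by simp
        exact le_antisymm (h0 ▸ hed.trans hvar) zero_le
      have heq : γ a = γ 1 := by
        rwa [edist_eq_zero] at this
      simp [heq]
    | succ N ih =>
      intro a ha hvar
      have ha1 : a ≤ 1 := ha.2
      by_cases hcase : dist (γ a) (γ 1) ≤ r/2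
      · have hk := key (γ a) (γ 1) hcase
        have hP : (1:ℝ) ≤ (1+H')^N := one_le_pow₀ hb1
        have hda : (0:ℝ) ≤ dist (f (γ a)) (f x) := dist_nonneg
        rw [pow_succ]
        nlinarith [mul_nonneg (mul_nonneg (sub_nonneg.mpr hP) (by linarith : (0:ℝ) ≤ 1+H')) hda,
          mul_nonneg (mul_nonneg (sub_nonneg.mpr hP) (by linarith : (0:ℝ) ≤ 1+H')) hR0]
      · push_neg at hcase
        -- intermediate value: find b with dist (γ a) (γ b) = r/2
        have hcont' : ContinuousOn γ (Set.Icc a 1) :=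
          hcont.mono (Set.Icc_subset_Icc ha.1 (le_refl 1))
        have hg : ContinuousOn (fun s => dist (γ a) (γ s)) (Set.Icc a 1) :=
          (continuous_const.dist continuous_id).comp_continuousOn hcont'
        have hiv := intermediate_value_Icc ha1 hg
        have hmem : r/2 ∈ Set.Icc (dist (γ a) (γ a)) (dist (γ a) (γ 1)) := by
          simp only [dist_self]
          exact ⟨by linarith, le_of_lt hcase⟩
        obtain ⟨b, hbmem, hbdist⟩ := hiv hmem
        have hab : a ≤ b := hbmem.1
        have hb1' : b ≤ 1 := hbmem.2
        -- additivity of variation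
        have hadd := eVariationOn.Icc_add_Icc γ (s := (Set.univ : Set ℝ)) hab hb1'
          (Set.mem_univ b)
        simp only [Set.univ_inter] at hadd
        have hvab : ENNReal.ofReal (r/2) ≤ eVariationOn γ (Set.Icc a b) := by
          have := eVariationOn.edist_le γ (s := Set.Icc a b) (x := a) (y := b)
            ⟨le_refl a, hab⟩ ⟨hab, le_refl b⟩
          rw [edist_dist] at this
          have hbd : dist (γ a) (γ b) = r/2 := hbdist
          rw [← hbd]
          exact this
        have hsplit : ENNReal.ofReal (((N:ℝ)+1) * (r/2)) =
            ENNReal.ofReal ((N:ℝ) * (r/2)) + ENNReal.ofReal (r/2) := by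
          rw [← ENNReal.ofReal_add (by positivity) (by positivity)]
          ring_nf
        have hvb1 : eVariationOn γ (Set.Icc b 1) ≤ ENNReal.ofReal ((N:ℝ) * (r/2)) := by
          have h1 : eVariationOn γ (Set.Icc b 1) + ENNReal.ofReal (r/2) ≤
              ENNReal.ofReal ((N:ℝ) * (r/2)) + ENNReal.ofReal (r/2) := by
            calc eVariationOn γ (Set.Icc b 1) + ENNReal.ofReal (r/2)
                ≤ eVariationOn γ (Set.Icc b 1) + eVariationOn γ (Set.Icc a b) :=
                  add_le_add_right hvab _
              _ = eVariationOn γ (Set.Icc a 1) := by rw [add_comm, hadd]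
              _ ≤ ENNReal.ofReal (((N:ℕ)+1:ℕ) * (r/2)) := hvar
              _ = ENNReal.ofReal ((N:ℝ) * (r/2)) + ENNReal.ofReal (r/2) := by
                  rw [← hsplit]; push_cast; ring_nf
          exact (ENNReal.add_le_add_iff_right ENNReal.ofReal_ne_top).mp h1
        have hbmem01 : b ∈ Set.Icc (0:ℝ) 1 := ⟨le_trans ha.1 hab, hb1'⟩
        have hih := ih b hbmem01 hvb1
        have hk := key (γ a) (γ b) (le_of_eq hbdist)
        have hP : (1:ℝ) ≤ (1+H')^N := one_le_pow₀ hb1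
        have hPn : (0:ℝ) ≤ (1+H')^N := by linarith
        have hda : (0:ℝ) ≤ dist (f (γ a)) (f x) := dist_nonneg
        have hdb : (0:ℝ) ≤ dist (f (γ b)) (f x) := dist_nonneg
        have hmul : (1+H')^N * dist (f (γ b)) (f x) ≤
            (1+H')^N * ((1+H') * dist (f (γ a)) (f x) + H' * R) :=
          mul_le_mul_of_nonneg_left hk hPn
        rw [pow_succ]
        nlinarith
  -- conclusion
  obtain ⟨γ, hγc, _, hγ0, hγ1, hγv⟩ := hqc x trivial y trivial
  set N := ⌈2*c*t⌉₊ with hNdef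
  have hvarN : eVariationOn γ (Set.Icc 0 1) ≤ ENNReal.ofReal ((N:ℝ) * (r/2)) := by
    refine hγv.trans (ENNReal.ofReal_le_ofReal ?_)
    have hxy' : dist x y ≤ t * r := by rw [dist_comm]; exact hdist
    have hceil : 2*c*t ≤ (N:ℝ) := Nat.le_ceil _
    have hc0 : (0:ℝ) < c := by linarith
    nlinarith
  have := main N γ hγc 0 ⟨le_refl 0, zero_le_one⟩ hvarN
  rw [hγ0, hγ1] at this
  simp only [dist_self, mul_zero, zero_add] at this
  have hP : (1:ℝ) ≤ (1+H')^N := one_le_pow₀ hb1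
  calc dist (f y) (f x) ≤ ((1+H')^N - 1) * R := this
    _ ≤ (1+H')^N * R := by nlinarith
end

section
/- Suppose that f : X → Y is a weakly H-quasisymmetric homeomorphism and that the image f(X) is c-quasiconvex. Then there is an embedding θ : [0,1] → [0,∞) with θ(0) = 0, depending only on H and c, such that if x, y, z are distinct points in X with |y−x| = t|z−x| and 0 < t ≤ 1, then |f(y)−f(x)| ≤ θ(t)|f(z)−f(x)|. -/
open Set Metric ENNReal Filter

universe u v

set_option maxHeartbeats 1000000

/-- a weakly quasisymmetric homeomorphism onto a quasiconvex image
satisfies a quasisymmetry-type inequality with an embedding `θ : [0,1] → [0,∞)`,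
`θ(0) = 0`. -/
theorem weakQS_control_function_small (c H : ℝ) (hc : 1 ≤ c) :
    ∃ θ : ℝ → ℝ, ContinuousOn θ (Set.Icc 0 1) ∧ Set.InjOn θ (Set.Icc 0 1) ∧
      θ 0 = 0 ∧ (∀ t ∈ Set.Icc (0:ℝ) 1, 0 ≤ θ t) ∧
      ∀ (X : Type u) (Y : Type v) [MetricSpace X] [MetricSpace Y]
        (f : X → Y) (g : Y → X),
        Continuous f → ContinuousOn g (Set.range f) → (∀ x : X, g (f x) = x) →
        WeaklyQSOn f Set.univ H → IsCQuasiconvex (Set.range f) c →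
        ∀ x y z : X, x ≠ y → x ≠ z → y ≠ z →
        ∀ t : ℝ, 0 < t → t ≤ 1 → dist y x = t * dist z x →
          dist (f y) (f x) ≤ θ t * dist (f z) (f x) := by
  classical
  set H' : ℝ := max H 1 with hH'def
  have hH'1 : (1:ℝ) ≤ H' := le_max_right _ _
  set B : ℝ := 4 * c * H' ^ 2 with hBdef
  have hBge : 4 * H' ≤ B := by nlinarith
  have hBpos : (0:ℝ) < B := by nlinarith
  set θ : ℝ → ℝ := fun t => if t = 0 then 0 else B * (1 - Real.log t)⁻¹ with hθdef
  have hθ0 : θ 0 = 0 := by simp [hθdef]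
  have hθval : ∀ t : ℝ, t ≠ 0 → θ t = B * (1 - Real.log t)⁻¹ := by
    intro t ht; simp [hθdef, ht]
  have hlogt : ∀ t : ℝ, 0 < t → t ≤ 1 → 0 < 1 - Real.log t := by
    intro t h1 h2
    have := Real.log_nonpos h1.le h2
    linarith
  have hθpos : ∀ t : ℝ, 0 < t → t ≤ 1 → 0 < θ t := by
    intro t h1 h2
    rw [hθval t h1.ne']
    exact mul_pos hBpos (inv_pos.mpr (hlogt t h1 h2))
  have hmono : StrictMonoOn θ (Set.Icc 0 1) := by
    intro a ha b hb hab
    have hb0 : 0 < b := lt_of_le_of_lt ha.1 hab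
    rcases eq_or_lt_of_le ha.1 with h0 | h0
    · rw [← h0, hθ0]
      exact hθpos b hb0 hb.2
    · rw [hθval a h0.ne', hθval b hb0.ne']
      have h1 : 0 < 1 - Real.log b := hlogt b hb0 hb.2
      have h2 : 1 - Real.log b < 1 - Real.log a := by
        have := Real.log_lt_log h0 hab
        linarith
      have h3 : (1 - Real.log a)⁻¹ < (1 - Real.log b)⁻¹ := by
        apply inv_strictAnti₀ h1 h2
      exact mul_lt_mul_of_pos_left h3 hBpos
  have hcont : ContinuousOn θ (Set.Icc 0 1) := by
    intro a ha
    rcases eq_or_lt_of_le ha.1 with h0 | h0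
    · subst h0
      have h1 : Filter.Tendsto (fun s : ℝ => 1 - Real.log s) (nhdsWithin 0 (Set.Ioi 0))
          Filter.atTop := by
        have h2 : Filter.Tendsto (fun s : ℝ => -Real.log s) (nhdsWithin 0 (Set.Ioi 0))
            Filter.atTop :=
          tendsto_neg_atBot_atTop.comp Real.tendsto_log_nhdsGT_zero
        have h3 := tendsto_atTop_add_const_left (nhdsWithin (0:ℝ) (Set.Ioi 0)) 1 h2
        exact h3.congr (fun s => by ring)
      have h4 : Filter.Tendsto (fun s : ℝ => B * (1 - Real.log s)⁻¹)
          (nhdsWithin 0 (Set.Ioi 0)) (nhds 0) := by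
        have := (tendsto_inv_atTop_zero.comp h1).const_mul B
        simpa using this
      have key : Filter.Tendsto θ (nhdsWithin 0 (Set.Ioi 0)) (nhds 0) := by
        apply h4.congr'
        filter_upwards [self_mem_nhdsWithin] with s hs
        exact (hθval s (ne_of_gt hs)).symm
      have hsub : Set.Icc (0:ℝ) 1 \ {0} ⊆ Set.Ioi (0:ℝ) := by
        rintro v ⟨hv1, hv2⟩
        exact lt_of_le_of_ne hv1.1 (Ne.symm (by simpa using hv2))
      have hC : ContinuousWithinAt θ (Set.Icc 0 1 \ {0}) 0 := by
        have h5 : Filter.Tendsto θ (nhdsWithin (0:ℝ) (Set.Icc 0 1 \ {0})) (nhds (θ 0)) := by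
          rw [hθ0]
          exact key.mono_left (nhdsWithin_mono _ hsub)
        exact h5
      exact continuousWithinAt_diff_self.mp hC
    · have haC : ContinuousAt θ a := by
        have hev : (fun s : ℝ => B * (1 - Real.log s)⁻¹) =ᶠ[nhds a] θ := by
          filter_upwards [isOpen_Ioi.mem_nhds h0] with s hs
          exact (hθval s (ne_of_gt hs)).symm
        have hC2 : ContinuousAt (fun s : ℝ => B * (1 - Real.log s)⁻¹) a := by
          have hlog : ContinuousAt Real.log a := Real.continuousAt_log h0.ne'
          have h1 : ContinuousAt (fun s : ℝ => 1 - Real.log s) a := continuousAt_const.sub hlog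
          have hne : 1 - Real.log a ≠ 0 := (hlogt a h0 ha.2).ne'
          exact continuousAt_const.mul (h1.inv₀ hne)
        exact hC2.congr hev
      exact haC.continuousWithinAt
  refine ⟨θ, hcont, hmono.injOn, hθ0, ?_, ?_⟩
  · intro t ht
    rcases eq_or_lt_of_le ht.1 with h0 | h0
    · rw [← h0, hθ0]
    · exact (hθpos t h0 ht.2).le
  intro X Y _ _ f g hf hg hgf hQS hQC x y z hxy hxz hyz t ht0 ht1 hdyx
  have hfg : ∀ w ∈ Set.range f, f (g w) = w := by
    rintro w ⟨a, rfl⟩; rw [hgf]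
  have hWQS : ∀ a b w : X, dist a b ≤ dist a w → dist (f a) (f b) ≤ H' * dist (f a) (f w) := by
    intro a b w h
    exact (hQS a (Set.mem_univ a) b (Set.mem_univ b) w (Set.mem_univ w) h).trans
      (mul_le_mul_of_nonneg_right (le_max_left H 1) dist_nonneg)
  have hrpos : 0 < dist y x := dist_pos.mpr (Ne.symm hxy)
  have hR0 : (0:ℝ) ≤ dist z x := dist_nonneg
  have hD0 : (0:ℝ) ≤ dist (f z) (f x) := dist_nonneg
  have hrR : dist y x ≤ dist z x := by
    rw [hdyx]
    nlinarith
  have hbase : dist (f y) (f x) ≤ H' * dist (f z) (f x) := by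
    have h := hWQS x y z (by rw [dist_comm x y, dist_comm x z]; exact hrR)
    rw [dist_comm (f x) (f y), dist_comm (f x) (f z)] at h
    exact h
  set L : ℝ := -Real.log t with hLdef
  have hL0 : 0 ≤ L := by
    rw [hLdef]; linarith [Real.log_nonpos ht0.le ht1]
  have hlog2pos : 0 < Real.log 2 := Real.log_pos one_lt_two
  set n : ℕ := Nat.floor (L / Real.log 2) with hndef
  have hnle : (n:ℝ) * Real.log 2 ≤ L := by
    have h1 := Nat.floor_le (div_nonneg hL0 hlog2pos.le)
    calc (n:ℝ) * Real.log 2 ≤ L / Real.log 2 * Real.log 2 :=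
          mul_le_mul_of_nonneg_right h1 hlog2pos.le
      _ = L := div_mul_cancel₀ _ hlog2pos.ne'
  have hlt : L < ((n:ℝ) + 1) * Real.log 2 := by
    have h1 := Nat.lt_floor_add_one (L / Real.log 2)
    calc L = L / Real.log 2 * Real.log 2 := (div_mul_cancel₀ _ hlog2pos.ne').symm
      _ < ((n:ℝ) + 1) * Real.log 2 := by
          exact mul_lt_mul_of_pos_right (by exact_mod_cast h1) hlog2pos
  have hln2 : Real.log 2 < 0.7 := by linarith [Real.log_two_lt_d9]
  have h1L : (1:ℝ) - Real.log t = 1 + L := by rw [hLdef]; ring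
  have h1Lpos : (0:ℝ) < 1 + L := by linarith
  suffices hkey2 : dist (f y) (f x) * (1 + L) ≤ B * dist (f z) (f x) by
    rw [hθval t ht0.ne', h1L]
    have h2 : dist (f y) (f x) ≤ B * dist (f z) (f x) / (1 + L) := by
      rw [le_div_iff₀ h1Lpos]; exact hkey2
    calc dist (f y) (f x) ≤ B * dist (f z) (f x) / (1 + L) := h2
      _ = B * (1 + L)⁻¹ * dist (f z) (f x) := by ring
  rcases Nat.eq_zero_or_pos n with hn0 | hn1
  · -- small case: n = 0, use the trivial bound
    have hLlt : L < Real.log 2 := by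
      have h1 := hlt
      rw [hn0] at h1
      push_cast at h1
      linarith
    have h17 : 1 + L ≤ 1.7 := by linarith
    have hdfy0 : (0:ℝ) ≤ dist (f y) (f x) := dist_nonneg
    nlinarith [mul_le_mul_of_nonneg_left h17 hdfy0,
      mul_le_mul_of_nonneg_right hbase (show (0:ℝ) ≤ 1.7 by norm_num),
      mul_le_mul_of_nonneg_right hbase hD0, hH'1, hBge, hD0,
      mul_le_mul_of_nonneg_right hBge hD0]
  · obtain ⟨γ, hγc, hγm, hγ0, hγ1, hγlen⟩ :=
      hQC (f x) (Set.mem_range_self x) (f z) (Set.mem_range_self z)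
    have hγlen' : eVariationOn γ (Set.Icc 0 1) ≤ ENNReal.ofReal (c * dist (f z) (f x)) := by
      rwa [dist_comm (f x) (f z)] at hγlen
    set φ : ℝ → ℝ := fun u => dist x (g (γ u)) with hφdef
    have hφc : ContinuousOn φ (Set.Icc 0 1) :=
      (continuous_const.dist continuous_id).comp_continuousOn (hg.comp hγc hγm)
    have hφ0 : φ 0 = 0 := by
      show dist x (g (γ 0)) = 0
      rw [hγ0, hgf, dist_self]
    have hφ1 : φ 1 = dist z x := by
      show dist x (g (γ 1)) = dist z x
      rw [hγ1, hgf, dist_comm]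
    have h2nt : (2:ℝ) ^ n * t ≤ 1 := by
      have hexp : (2:ℝ) ^ n ≤ t⁻¹ := by
        have h1 : Real.exp ((n:ℝ) * Real.log 2) ≤ Real.exp L := Real.exp_le_exp.mpr hnle
        rw [Real.exp_nat_mul, Real.exp_log two_pos] at h1
        rwa [hLdef, Real.exp_neg, Real.exp_log ht0] at h1
      calc (2:ℝ) ^ n * t ≤ t⁻¹ * t := mul_le_mul_of_nonneg_right hexp ht0.le
        _ = 1 := inv_mul_cancel₀ ht0.ne'
    have h2nr : ∀ j ≤ n, (2:ℝ) ^ j * dist y x ≤ dist z x := by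
      intro j hj
      have h1 : (2:ℝ) ^ j ≤ 2 ^ n := pow_le_pow_right₀ one_le_two hj
      have h2 : (0:ℝ) ≤ (2:ℝ) ^ j := by positivity
      calc (2:ℝ) ^ j * dist y x = 2 ^ j * t * dist z x := by rw [hdyx]; ring
        _ ≤ 2 ^ n * t * dist z x := by nlinarith
        _ ≤ 1 * dist z x := by nlinarith
        _ = dist z x := one_mul _
    set A : ℕ → Set ℝ := fun j => {v | v ∈ Set.Icc (0:ℝ) 1 ∧ 2 ^ j * dist y x ≤ φ v}
      with hAdef
    have hAclosed : ∀ j, IsClosed (A j) := by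
      intro j
      have hAeq : A j = Set.Icc (0:ℝ) 1 ∩ φ ⁻¹' Set.Ici (2 ^ j * dist y x) := rfl
      rw [hAeq]
      exact hφc.preimage_isClosed_of_isClosed isClosed_Icc isClosed_Ici
    have hAbdd : ∀ j, BddBelow (A j) := fun j => ⟨0, fun v hv => hv.1.1⟩
    have hAne : ∀ j ≤ n, (A j).Nonempty := by
      intro j hj
      refine ⟨1, ⟨Set.right_mem_Icc.mpr zero_le_one, ?_⟩⟩
      rw [hφ1]
      exact h2nr j hj
    set s : ℕ → ℝ := fun j => sInf (A (min j n)) with hsdef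
    have hsval : ∀ j, s j = sInf (A (min j n)) := fun j => rfl
    have hsmem : ∀ j, s j ∈ A (min j n) := fun j =>
      (hAclosed _).csInf_mem (hAne _ (min_le_right j n)) (hAbdd _)
    have hsIcc : ∀ j, s j ∈ Set.Icc (0:ℝ) 1 := fun j => (hsmem j).1
    have hsmono : Monotone s := by
      intro j k hjk
      refine csInf_le_csInf (hAbdd _) (hAne _ (min_le_right k n)) ?_
      intro v hv
      refine ⟨hv.1, le_trans ?_ hv.2⟩
      have h1 : (2:ℝ) ^ min j n ≤ 2 ^ min k n :=
        pow_le_pow_right₀ one_le_two (min_le_min_right n hjk)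
      exact mul_le_mul_of_nonneg_right h1 hrpos.le
    have hφs : ∀ j ≤ n, φ (s j) = 2 ^ j * dist y x := by
      intro j hj
      have hmin : min j n = j := min_eq_left hj
      have hmem := hsmem j
      rw [hmin] at hmem
      have hs0 : 0 ≤ s j := (hsIcc j).1
      have hs1 : s j ≤ 1 := (hsIcc j).2
      obtain ⟨v, hv, hveq⟩ :=
        intermediate_value_Icc hs0 (hφc.mono (Set.Icc_subset_Icc_right hs1))
          ⟨by rw [hφ0]; positivity, hmem.2⟩
      have hvA : v ∈ A j := ⟨⟨hv.1, hv.2.trans hs1⟩, hveq.ge⟩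
      have hle : s j ≤ v := by
        rw [hsval j, hmin]
        exact csInf_le (hAbdd j) hvA
      have hveqs : v = s j := le_antisymm hv.2 hle
      rw [← hveqs]
      exact hveq
    have hfγ : ∀ j, f (g (γ (s j))) = γ (s j) := fun j => hfg _ (hγm (hsIcc j))
    have hkey : ∀ j < n, dist (f y) (f x) ≤ H' ^ 2 * dist (γ (s (j + 1))) (γ (s j)) := by
      intro j hj
      have hj1 : j + 1 ≤ n := hj
      have hdj : dist x (g (γ (s j))) = 2 ^ j * dist y x := hφs j hj.le
      have hdj1 : dist x (g (γ (s (j + 1)))) = 2 ^ (j + 1) * dist y x := hφs (j + 1) hj1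
      have h2j1 : (1:ℝ) ≤ 2 ^ j := by simpa using pow_le_pow_right₀ (one_le_two (α:=ℝ)) (Nat.zero_le j)
      have hstepA : dist x y ≤ dist x (g (γ (s j))) := by
        rw [hdj, dist_comm x y]
        nlinarith [hrpos.le]
      have hA := hWQS x y (g (γ (s j))) hstepA
      rw [hfγ j] at hA
      have htri := dist_triangle x (g (γ (s j))) (g (γ (s (j + 1))))
      have hstepB : dist (g (γ (s j))) x ≤ dist (g (γ (s j))) (g (γ (s (j + 1)))) := by
        rw [dist_comm _ x, hdj]
        rw [hdj, hdj1] at htri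
        have e1 : (2:ℝ) ^ (j + 1) * dist y x = 2 * (2 ^ j * dist y x) := by ring
        linarith
      have hB2 := hWQS (g (γ (s j))) x (g (γ (s (j + 1)))) hstepB
      rw [hfγ j, hfγ (j + 1)] at hB2
      calc dist (f y) (f x) = dist (f x) (f y) := dist_comm _ _
        _ ≤ H' * dist (f x) (γ (s j)) := hA
        _ = H' * dist (γ (s j)) (f x) := by rw [dist_comm (f x)]
        _ ≤ H' * (H' * dist (γ (s j)) (γ (s (j + 1)))) :=
            mul_le_mul_of_nonneg_left hB2 (by linarith)
        _ = H' ^ 2 * dist (γ (s (j + 1))) (γ (s j)) := by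
            rw [dist_comm (γ (s (j + 1)))]; ring
    have hsum : ∑ j ∈ Finset.range n, dist (γ (s (j + 1))) (γ (s j)) ≤
        c * dist (f z) (f x) := by
      have h1 : ∑ j ∈ Finset.range n, edist (γ (s (j + 1))) (γ (s j)) ≤
          eVariationOn γ (Set.Icc 0 1) :=
        eVariationOn.sum_le (f := γ) (n := n) hsmono hsIcc
      have h2 := h1.trans hγlen'
      have h3 : ∑ j ∈ Finset.range n, edist (γ (s (j + 1))) (γ (s j)) =
          ENNReal.ofReal (∑ j ∈ Finset.range n, dist (γ (s (j + 1))) (γ (s j))) := by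
        rw [ENNReal.ofReal_sum_of_nonneg (fun j _ => dist_nonneg)]
        exact Finset.sum_congr rfl fun j _ => edist_dist _ _
      rw [h3] at h2
      exact (ENNReal.ofReal_le_ofReal_iff (mul_nonneg (by linarith) hD0)).mp h2
    have hn1R : (1:ℝ) ≤ (n:ℝ) := by exact_mod_cast hn1
    have hsum2 : (n:ℝ) * dist (f y) (f x) ≤ H' ^ 2 * (c * dist (f z) (f x)) := by
      calc (n:ℝ) * dist (f y) (f x) = ∑ _j ∈ Finset.range n, dist (f y) (f x) := by
            rw [Finset.sum_const, Finset.card_range, nsmul_eq_mul]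
        _ ≤ ∑ j ∈ Finset.range n, H' ^ 2 * dist (γ (s (j + 1))) (γ (s j)) :=
            Finset.sum_le_sum fun j hj => hkey j (Finset.mem_range.mp hj)
        _ = H' ^ 2 * ∑ j ∈ Finset.range n, dist (γ (s (j + 1))) (γ (s j)) := by
            rw [Finset.mul_sum]
        _ ≤ H' ^ 2 * (c * dist (f z) (f x)) :=
            mul_le_mul_of_nonneg_left hsum (by positivity)
    have h4n : 1 + L ≤ 4 * (n:ℝ) := by
      have h := mul_le_mul_of_nonneg_left hln2.le (show (0:ℝ) ≤ (n:ℝ) + 1 by linarith)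
      linarith
    have hdfy0 : (0:ℝ) ≤ dist (f y) (f x) := dist_nonneg
    calc dist (f y) (f x) * (1 + L) ≤ dist (f y) (f x) * (4 * (n:ℝ)) :=
          mul_le_mul_of_nonneg_left h4n hdfy0
      _ = 4 * ((n:ℝ) * dist (f y) (f x)) := by ring
      _ ≤ 4 * (H' ^ 2 * (c * dist (f z) (f x))) := by linarith
      _ = B * dist (f z) (f x) := by rw [hBdef]; ring
end

section
/- Suppose that X is a c-quasiconvex metric space, that G ⊊ X is a domain, and that x, y ∈ G satisfy |x−y| < δ_G(x)/(50c²). If γ is an ε-short arc in G joining x and y with 0 < ε ≤ k_G(x,y)/6, then γ ⊂ B(x, 8c|x−y|), i.e., every point of γ lies within distance 8c|x−y| of x. -/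
open Set Metric ENNReal Filter

universe u v

/-- a short arc with nearby endpoints stays in the ball `B(x, 8c|x-y|)`. -/
theorem short_arc_in_ball {X : Type u} [MetricSpace X] (c : ℝ) (hc : 1 ≤ c)
    (hX : IsCQuasiconvex (Set.univ : Set X) c)
    (G : Set X) (hG : IsProperDomain G)
    (γ : ℝ → X) (ε : ℝ) (hγ : IsShortArcIn G γ ε)
    (hxy : dist (γ 0) (γ 1) < bdist G (γ 0) / (50 * c ^ 2))
    (hε0 : 0 < ε) (hεk : ENNReal.ofReal (6 * ε) ≤ qhDist G (γ 0) (γ 1)) :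
    ∀ t ∈ Set.Icc (0:ℝ) 1, dist (γ t) (γ 0) < 8 * c * dist (γ 0) (γ 1) := by
  obtain ⟨hGopen, hGconn, hGne⟩ := hG
  obtain ⟨⟨hγcont, hγmaps⟩, hγinj, hγshort⟩ := hγ
  set x := γ 0 with hx
  set y := γ 1 with hy
  have hxG : x ∈ G := hγmaps ⟨le_refl 0, zero_le_one⟩
  set δ := bdist G x with hδ
  have hGc : (Gᶜ : Set X).Nonempty := by
    rw [Set.nonempty_compl]; exact hGne
  have hδpos : 0 < δ := by
    rw [hδ, bdist,
      ← (isClosed_compl_iff.mpr hGopen).notMem_iff_infDist_pos hGc]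
    simpa using hxG
  have hc0 : (0:ℝ) < c := lt_of_lt_of_le one_pos hc
  set d := dist x y with hd
  have hd0 : 0 ≤ d := dist_nonneg
  have hball : ∀ w : X, dist w x < δ → w ∈ G := by
    intro w hw
    by_contra hwG
    have h1 : Metric.infDist x Gᶜ ≤ dist x w := Metric.infDist_le_dist_of_mem hwG
    rw [dist_comm] at hw
    exact absurd h1 (not_le.mpr hw)
  -- the case x = y is impossible
  have hdpos : 0 < d := by
    rcases lt_or_eq_of_le hd0 with h | h
    · exact h
    · exfalso
      have hyx : y = x := by
        have : dist x y = 0 := h.symm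
        exact (dist_eq_zero.mp this).symm
      have hqzero : qhDist G x y ≤ 0 := by
        have hmem : (fun _ : ℝ => x) ∈
            {σ : ℝ → X | IsCurveIn G σ ∧ σ 0 = x ∧ σ 1 = y} := by
          refine ⟨⟨continuousOn_const, fun t _ => hxG⟩, rfl, hyx.symm⟩
        refine le_trans (iInf₂_le _ hmem) ?_
        simp only [qhLength]
        refine iSup_le fun p => ?_
        simp [edist_self, ENNReal.zero_div]
      have h6 : ENNReal.ofReal (6 * ε) ≤ 0 := le_trans hεk hqzero
      rw [le_zero_iff, ENNReal.ofReal_eq_zero] at h6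
      linarith
  have hcd : c * d < δ / 50 := by
    have h1 : d * (50 * c ^ 2) < δ := (lt_div_iff₀ (by positivity)).mp hxy
    nlinarith [mul_pos hc0 hdpos, sq_nonneg (c - 1)]
  have hδcd : 0 < δ - c * d := by
    have : 0 < c * d := mul_pos hc0 hdpos
    linarith
  -- quasiconvex curve from x to y
  obtain ⟨σ, hσcont, hσmaps, hσ0, hσ1, hσlen⟩ :=
    hX x (Set.mem_univ x) y (Set.mem_univ y)
  have hσdist : ∀ t ∈ Set.Icc (0:ℝ) 1, dist (σ t) x ≤ c * d := by
    intro t ht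
    have h1 : edist (σ t) (σ 0) ≤ eVariationOn σ (Set.Icc 0 1) :=
      eVariationOn.edist_le σ ht (Set.left_mem_Icc.mpr zero_le_one)
    have h2 : edist (σ t) (σ 0) ≤ ENNReal.ofReal (c * d) := le_trans h1 hσlen
    rw [hσ0] at h2
    rwa [edist_dist, ENNReal.ofReal_le_ofReal_iff (by positivity)] at h2
  have hσG : Set.MapsTo σ (Set.Icc 0 1) G := by
    intro t ht
    refine hball _ (lt_of_le_of_lt (hσdist t ht) ?_)
    linarith
  have hσbdl : ∀ t ∈ Set.Icc (0:ℝ) 1, δ - c * d ≤ bdist G (σ t) := by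
    intro t ht
    have h1 : Metric.infDist x Gᶜ ≤ Metric.infDist (σ t) Gᶜ + dist x (σ t) :=
      Metric.infDist_le_infDist_add_dist
    have h2 : dist x (σ t) ≤ c * d := by
      rw [dist_comm]; exact hσdist t ht
    simp only [bdist] at *
    linarith
  have hσbdu : ∀ t ∈ Set.Icc (0:ℝ) 1, bdist G (σ t) ≤ δ + c * d := by
    intro t ht
    have h1 : Metric.infDist (σ t) Gᶜ ≤ Metric.infDist x Gᶜ + dist (σ t) x :=
      Metric.infDist_le_infDist_add_dist
    have h2 := hσdist t ht
    simp only [bdist] at *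
    linarith
  -- upper bound on the quasihyperbolic length of σ
  have hKlen : qhLength G σ (Set.Icc 0 1) ≤
      ENNReal.ofReal (c * d / (δ - c * d)) := by
    simp only [qhLength]
    refine iSup_le ?_
    rintro ⟨n, u, hu, hus⟩
    have hterm : ∀ i, edist (σ (u (i + 1))) (σ (u i)) /
        ENNReal.ofReal (⨆ t ∈ Set.Icc (u i) (u (i + 1)), bdist G (σ t)) ≤
        edist (σ (u (i + 1))) (σ (u i)) / ENNReal.ofReal (δ - c * d) := by
      intro i
      refine ENNReal.div_le_div le_rfl (ENNReal.ofReal_le_ofReal ?_)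
      have hsub : Set.Icc (u i) (u (i + 1)) ⊆ Set.Icc (0:ℝ) 1 := by
        intro t ht
        exact ⟨le_trans (hus i).1 ht.1, le_trans ht.2 (hus (i + 1)).2⟩
      have hbdd : BddAbove (Set.range fun t =>
          ⨆ _ : t ∈ Set.Icc (u i) (u (i + 1)), bdist G (σ t)) := by
        refine ⟨δ + c * d, ?_⟩
        rintro r ⟨t, rfl⟩
        exact Real.iSup_le (fun ht => hσbdu t (hsub ht)) (by positivity)
      have hmem : u i ∈ Set.Icc (u i) (u (i + 1)) :=
        ⟨le_rfl, hu (Nat.le_succ i)⟩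
      refine le_trans (hσbdl (u i) (hus i)) ?_
      refine le_ciSup_of_le hbdd (u i) ?_
      rw [ciSup_pos hmem]
    calc
      ∑ i ∈ Finset.range n, edist (σ (u (i + 1))) (σ (u i)) /
          ENNReal.ofReal (⨆ t ∈ Set.Icc (u i) (u (i + 1)), bdist G (σ t)) ≤
          ∑ i ∈ Finset.range n,
            edist (σ (u (i + 1))) (σ (u i)) / ENNReal.ofReal (δ - c * d) :=
        Finset.sum_le_sum fun i _ => hterm i
      _ = (∑ i ∈ Finset.range n, edist (σ (u (i + 1))) (σ (u i))) /
          ENNReal.ofReal (δ - c * d) := by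
        simp_rw [div_eq_mul_inv, ← Finset.sum_mul]
      _ ≤ ENNReal.ofReal (c * d) / ENNReal.ofReal (δ - c * d) :=
        ENNReal.div_le_div (le_trans (eVariationOn.sum_le (f := σ) (n := n) hu hus) hσlen)
          le_rfl
      _ = ENNReal.ofReal (c * d / (δ - c * d)) :=
        (ENNReal.ofReal_div_of_pos hδcd).symm
  have hK : qhDist G x y ≤ ENNReal.ofReal (c * d / (δ - c * d)) := by
    refine le_trans (iInf₂_le σ ?_) hKlen
    exact ⟨⟨hσcont, hσG⟩, hσ0, hσ1⟩
  -- bound on ε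
  have hεle : 6 * ε ≤ c * d / (δ - c * d) := by
    have h1 : ENNReal.ofReal (6 * ε) ≤ ENNReal.ofReal (c * d / (δ - c * d)) :=
      le_trans hεk hK
    rwa [ENNReal.ofReal_le_ofReal_iff (by positivity)] at h1
  -- main argument: suppose some point of γ is far from x
  intro t ht
  by_contra hcon
  push_neg at hcon
  set g : ℝ → ℝ := fun s => dist (γ s) x with hg
  have hgcont : ContinuousOn g (Set.Icc 0 1) :=
    (continuous_id.dist continuous_const).comp_continuousOn hγcont
  set S : Set ℝ := Set.Icc 0 1 ∩ g ⁻¹' Set.Ici (8 * c * d) with hS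
  have hSclosed : IsClosed S :=
    hgcont.preimage_isClosed_of_isClosed isClosed_Icc isClosed_Ici
  have hSne : S.Nonempty := ⟨t, ht, hcon⟩
  have hSbdd : BddBelow S := ⟨0, fun s hs => hs.1.1⟩
  set t₀ := sInf S with ht₀
  have ht₀S : t₀ ∈ S := hSclosed.csInf_mem hSne hSbdd
  have ht₀mem : t₀ ∈ Set.Icc (0:ℝ) 1 := ht₀S.1
  have ht₀big : 8 * c * d ≤ g t₀ := ht₀S.2
  have h8cd : 0 < 8 * c * d := by positivity
  have ht₀pos : 0 < t₀ := by
    rcases lt_or_eq_of_le ht₀mem.1 with h | h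
    · exact h
    · exfalso
      have : g t₀ = 0 := by rw [← h]; simp [hg, hx]
      linarith
  have hsmall : ∀ s ∈ Set.Icc (0:ℝ) t₀, g s ≤ 8 * c * d := by
    set C : Set ℝ := Set.Icc 0 1 ∩ g ⁻¹' Set.Iic (8 * c * d) with hC
    have hCclosed : IsClosed C :=
      hgcont.preimage_isClosed_of_isClosed isClosed_Icc isClosed_Iic
    have hIco : Set.Ico 0 t₀ ⊆ C := by
      intro s hs
      have hs1 : s ∈ Set.Icc (0:ℝ) 1 := ⟨hs.1, le_trans hs.2.le ht₀mem.2⟩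
      refine ⟨hs1, ?_⟩
      by_contra hbig
      simp only [Set.mem_preimage, Set.mem_Iic, not_le] at hbig
      have : t₀ ≤ s := csInf_le hSbdd ⟨hs1, hbig.le⟩
      exact absurd hs.2 (not_lt.mpr this)
    have hIcc : Set.Icc 0 t₀ ⊆ C := by
      have h1 : Set.Icc (0:ℝ) t₀ = closure (Set.Ico 0 t₀) := by
        rw [closure_Ico (ne_of_lt ht₀pos)]
      rw [h1, ← hCclosed.closure_eq]
      exact closure_mono hIco
    exact fun s hs => (hIcc hs).2
  -- lower bound on the quasihyperbolic length of γ
  have hlow : ENNReal.ofReal (8 * c * d) / ENNReal.ofReal (δ + 8 * c * d) ≤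
      qhLength G γ (Set.Icc 0 1) := by
    simp only [qhLength]
    set u : ℕ → ℝ := fun i => min ((i : ℝ) * t₀) t₀ with hu_def
    have humono : Monotone u := fun a b hab =>
      min_le_min (mul_le_mul_of_nonneg_right (by exact_mod_cast hab)
        ht₀pos.le) le_rfl
    have hu0 : u 0 = 0 := by simp [hu_def, ht₀pos.le]
    have hu1 : u 1 = t₀ := by simp [hu_def]
    have humem : ∀ i, u i ∈ Set.Icc (0:ℝ) 1 := by
      intro i
      constructor
      · exact le_min (by positivity) ht₀pos.le
      · exact le_trans (min_le_right _ _) ht₀mem.2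
    refine le_iSup_of_le
      (⟨1, ⟨u, humono, humem⟩⟩ :
        ℕ × {u : ℕ → ℝ // Monotone u ∧ ∀ i, u i ∈ Set.Icc (0:ℝ) 1}) ?_
    show ENNReal.ofReal (8 * c * d) / ENNReal.ofReal (δ + 8 * c * d) ≤
      ∑ i ∈ Finset.range 1, edist (γ (u (i + 1))) (γ (u i)) /
        ENNReal.ofReal (⨆ s ∈ Set.Icc (u i) (u (i + 1)), bdist G (γ s))
    rw [Finset.sum_range_one, show (0:ℕ) + 1 = 1 from rfl, hu0, hu1]
    refine ENNReal.div_le_div ?_ (ENNReal.ofReal_le_ofReal ?_)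
    · rw [edist_dist]
      exact ENNReal.ofReal_le_ofReal ht₀big
    · exact Real.iSup_le
        (fun s => Real.iSup_le (fun hs => by
          have h1 : Metric.infDist (γ s) Gᶜ ≤
              Metric.infDist x Gᶜ + dist (γ s) x :=
            Metric.infDist_le_infDist_add_dist
          have h2 := hsmall s hs
          simp only [bdist, hg] at *
          linarith) (by positivity))
        (by positivity)
  -- combine
  have hup : qhLength G γ (Set.Icc 0 1) ≤
      ENNReal.ofReal (c * d / (δ - c * d) + ε) := by
    refine le_trans hγshort ?_
    rw [ENNReal.ofReal_add (by positivity) hε0.le]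
    exact add_le_add hK le_rfl
  have hfinal : 8 * c * d / (δ + 8 * c * d) ≤ c * d / (δ - c * d) + ε := by
    have h1 : ENNReal.ofReal (8 * c * d / (δ + 8 * c * d)) ≤
        ENNReal.ofReal (c * d / (δ - c * d) + ε) := by
      rw [ENNReal.ofReal_div_of_pos (by positivity)]
      exact le_trans hlow hup
    rwa [ENNReal.ofReal_le_ofReal_iff (by positivity)] at h1
  -- numeric contradiction
  have h3 : 8 * c * d / (δ + 8 * c * d) ≤ (7 / 6 * (c * d)) / (δ - c * d) := by
    have heq : (7 / 6 * (c * d)) / (δ - c * d) =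
        c * d / (δ - c * d) + (c * d / (δ - c * d)) / 6 := by ring
    rw [heq]
    linarith
  have h4 : 8 * c * d * (δ - c * d) ≤ 7 / 6 * (c * d) * (δ + 8 * c * d) :=
    (div_le_div_iff₀ (by positivity) hδcd).mp h3
  nlinarith [mul_pos hc0 hdpos, mul_lt_mul_of_pos_left hcd (mul_pos hc0 hdpos),
    mul_pos (mul_pos hc0 hdpos) hδpos]
end
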